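/- arXiv:2001.00700 — 2 statements merged into one kernel-verified Lean document; each statement's English description precedes it below -/
import Mathlib

section
/- Under Assumption 1, for complex numbers z,w with z≠0 and w≠0, if |z|≠z or |w|≠w (i.e., z or w is not a positive real), then spr(Ĉ(z,w)) < spr(Ĉ(|z|,|w|)), where Ĉ(z,w)=Σ_{i,j∈{−1,0,1}} z^i w^j A_{i,j} and spr denotes the spectral radius (maximum modulus of eigenvalues). -/
open scoped ENNReal

namespace MMRW2d

/-! ## General kernels over a countable index set, with entries in `ℝ≥0∞` -/

/-- Kernel (infinite matrix) multiplication over `ℝ≥0∞`. -/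
noncomputable def kmul {α : Type*} (p q : α → α → ℝ≥0∞) : α → α → ℝ≥0∞ :=
  fun i j => ∑' k, p i k * q k j

/-- `n`-step kernel power. -/
noncomputable def kpow {α : Type*} [DecidableEq α] (p : α → α → ℝ≥0∞) : ℕ → α → α → ℝ≥0∞
  | 0 => fun i j => if i = j then 1 else 0
  | n + 1 => kmul p (kpow p n)

/-- Convergence parameter `cp(A) = sup{r ≥ 0 : Σ_n rⁿ Aⁿ < ∞ entrywise}`. -/
noncomputable def cp {α : Type*} [DecidableEq α] (p : α → α → ℝ≥0∞) : ℝ≥0∞ :=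
  sSup {r : ℝ≥0∞ | ∀ i j, (∑' n : ℕ, r ^ n * kpow p n i j) ≠ ⊤}

/-- `R` is the minimal nonnegative solution of `R = R² A₋₁ + R A₀ + A₁`. -/
def IsMinimalSolution {κ : Type*} (Am A0 Ap R : κ → κ → ℝ≥0∞) : Prop :=
  (∀ i j, R i j = kmul (kmul R R) Am i j + kmul R A0 i j + Ap i j) ∧
  ∀ S : κ → κ → ℝ≥0∞,
    (∀ i j, S i j = kmul (kmul S S) Am i j + kmul S A0 i j + Ap i j) → ∀ i j, R i j ≤ S i j

variable {s₀ : ℕ}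

/-! ## The 2d skip-free Markov-modulated random walk -/

/-- The defining data of a 2d-MMRW: the blocks `A_{i,j}` are nonnegative, vanish outside
`i,j ∈ {-1,0,1}`, and `Σ_{i,j} A_{i,j}` is stochastic. -/
structure IsMMRW (A : ℤ → ℤ → Matrix (Fin s₀) (Fin s₀) ℝ) : Prop where
  nonneg : ∀ i j a b, 0 ≤ A i j a b
  skipfree : ∀ i j : ℤ, (i ∉ Finset.Icc (-1 : ℤ) 1 ∨ j ∉ Finset.Icc (-1 : ℤ) 1) → A i j = 0
  stochastic : ∀ a, ∑ i ∈ Finset.Icc (-1 : ℤ) 1, ∑ j ∈ Finset.Icc (-1 : ℤ) 1, ∑ b, A i j a b = 1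

/-- The transition kernel of the 2d-MMRW `{Y_n}` on `𝕊 = ℤ² × S₀`. -/
noncomputable def ker (A : ℤ → ℤ → Matrix (Fin s₀) (Fin s₀) ℝ) :
    (ℤ × ℤ × Fin s₀) → (ℤ × ℤ × Fin s₀) → ℝ≥0∞ :=
  fun y y' => ENNReal.ofReal (A (y'.1 - y.1) (y'.2.1 - y.2.1) y.2.2 y'.2.2)

/-- The substochastic kernel `P₊`, the restriction of `P` to `𝕊₊ = ℤ₊² × S₀`. -/
noncomputable def kerPlus (A : ℤ → ℤ → Matrix (Fin s₀) (Fin s₀) ℝ) :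
    (ℕ × ℕ × Fin s₀) → (ℕ × ℕ × Fin s₀) → ℝ≥0∞ :=
  fun y y' =>
    ENNReal.ofReal (A ((y'.1 : ℤ) - (y.1 : ℤ)) ((y'.2.1 : ℤ) - (y.2.1 : ℤ)) y.2.2 y'.2.2)

/-- The occupation measure: `q̃_{y,y'} = E[Σ_{n<τ} 1(Y_n = y') | Y₀ = y] = Σ_n [P₊ⁿ]_{y,y'}`,
the `(y,y')` entry of the fundamental matrix of `P₊`. -/
noncomputable def occ (A : ℤ → ℤ → Matrix (Fin s₀) (Fin s₀) ℝ) (y y' : ℕ × ℕ × Fin s₀) :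
    ℝ≥0∞ :=
  ∑' n : ℕ, kpow (kerPlus A) n y y'

/-- The expected exit time `E(τ | Y₀ = y) = Σ_{n≥0} P(τ > n | Y₀ = y)
= Σ_n Σ_{y'∈𝕊₊} [P₊ⁿ]_{y,y'}`. -/
noncomputable def Etau (A : ℤ → ℤ → Matrix (Fin s₀) (Fin s₀) ℝ) (y : ℕ × ℕ × Fin s₀) : ℝ≥0∞ :=
  ∑' n : ℕ, ∑' y' : ℕ × ℕ × Fin s₀, kpow (kerPlus A) n y y'

/-- Assumption 1: `{Y_n}` is irreducible and aperiodic (equivalently, primitive). -/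
def Assumption1 (A : ℤ → ℤ → Matrix (Fin s₀) (Fin s₀) ℝ) : Prop :=
  ∀ y y' : ℤ × ℤ × Fin s₀, ∃ N : ℕ, ∀ n ≥ N, 0 < kpow (ker A) n y y'

/-- Assumption 3: the substochastic matrix `P₊` is irreducible. -/
def Assumption3 (A : ℤ → ℤ → Matrix (Fin s₀) (Fin s₀) ℝ) : Prop :=
  ∀ y y' : ℕ × ℕ × Fin s₀, ∃ n : ℕ, 1 ≤ n ∧ 0 < kpow (kerPlus A) n y y'

/-- Mean drift `a₁ = π_{*,*}(−A_{−1,*}+A_{1,*})𝟏` in the first coordinate. -/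
noncomputable def a1 (A : ℤ → ℤ → Matrix (Fin s₀) (Fin s₀) ℝ) (π : Fin s₀ → ℝ) : ℝ :=
  ∑ a, π a * ∑ b, ∑ k ∈ Finset.Icc (-1 : ℤ) 1, (A 1 k a b - A (-1) k a b)

/-- Mean drift `a₂ = π_{*,*}(−A_{*,−1}+A_{*,1})𝟏` in the second coordinate. -/
noncomputable def a2 (A : ℤ → ℤ → Matrix (Fin s₀) (Fin s₀) ℝ) (π : Fin s₀ → ℝ) : ℝ :=
  ∑ a, π a * ∑ b, ∑ k ∈ Finset.Icc (-1 : ℤ) 1, (A k 1 a b - A k (-1) a b)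

/-- `π` is the stationary distribution of the stochastic matrix `A_{*,*} = Σ_{i,j} A_{i,j}`. -/
def IsStationary (A : ℤ → ℤ → Matrix (Fin s₀) (Fin s₀) ℝ) (π : Fin s₀ → ℝ) : Prop :=
  (∀ a, 0 ≤ π a) ∧ (∑ a, π a = 1) ∧
    ∀ b, (∑ a, π a * ∑ i ∈ Finset.Icc (-1 : ℤ) 1, ∑ j ∈ Finset.Icc (-1 : ℤ) 1, A i j a b) = π b

/-- Assumption 2: `a₁ < 0` or `a₂ < 0`. -/
def Assumption2 (A : ℤ → ℤ → Matrix (Fin s₀) (Fin s₀) ℝ) : Prop :=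
  ∃ π : Fin s₀ → ℝ, IsStationary A π ∧ (a1 A π < 0 ∨ a2 A π < 0)

/-! ## Spectral radius and the sets Γ, Γ̄, 𝒟 -/

/-- Spectral radius (maximum modulus of the eigenvalues) of a complex matrix. -/
noncomputable def sprC (M : Matrix (Fin s₀) (Fin s₀) ℂ) : ℝ :=
  sSup ((fun z : ℂ => ‖z‖) '' spectrum ℂ M)

/-- The matrix moment generating function `A_{*,*}(θ₁,θ₂) = Σ_{i,j} e^{iθ₁+jθ₂} A_{i,j}`. -/
noncomputable def Ass (A : ℤ → ℤ → Matrix (Fin s₀) (Fin s₀) ℝ) (θ₁ θ₂ : ℝ) :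
    Matrix (Fin s₀) (Fin s₀) ℝ :=
  ∑ i ∈ Finset.Icc (-1 : ℤ) 1, ∑ j ∈ Finset.Icc (-1 : ℤ) 1,
    Real.exp ((i : ℝ) * θ₁ + (j : ℝ) * θ₂) • A i j

/-- `χ(θ₁,θ₂) = spr(A_{*,*}(θ₁,θ₂))`. -/
noncomputable def chi (A : ℤ → ℤ → Matrix (Fin s₀) (Fin s₀) ℝ) (θ₁ θ₂ : ℝ) : ℝ :=
  sprC ((Ass A θ₁ θ₂).map Complex.ofReal)

/-- `Γ = {(θ₁,θ₂) : spr(A_{*,*}(θ₁,θ₂)) < 1}`. -/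
def GammaSet (A : ℤ → ℤ → Matrix (Fin s₀) (Fin s₀) ℝ) : Set (ℝ × ℝ) :=
  {θ | chi A θ.1 θ.2 < 1}

/-- `Γ̄ = {(θ₁,θ₂) : spr(A_{*,*}(θ₁,θ₂)) ≤ 1}`. -/
def GammaBar (A : ℤ → ℤ → Matrix (Fin s₀) (Fin s₀) ℝ) : Set (ℝ × ℝ) :=
  {θ | chi A θ.1 θ.2 ≤ 1}

/-- `𝒟 = {θ : θ < θ' componentwise for some θ' ∈ Γ}`. -/
def Dset (A : ℤ → ℤ → Matrix (Fin s₀) (Fin s₀) ℝ) : Set (ℝ × ℝ) :=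
  {θ | ∃ θ' ∈ GammaSet A, θ.1 < θ'.1 ∧ θ.2 < θ'.2}

/-! ## Moment generating function of the occupation measures and its domain -/

/-- `(j,j')`-entry of `Φ_x(θ₁,θ₂) = Σ_{k₁,k₂≥0} e^{k₁θ₁+k₂θ₂} N_{x,(k₁,k₂)}`. -/
noncomputable def Phi (A : ℤ → ℤ → Matrix (Fin s₀) (Fin s₀) ℝ) (x : ℕ × ℕ) (θ : ℝ × ℝ)
    (j j' : Fin s₀) : ℝ≥0∞ :=
  ∑' k : ℕ × ℕ, ENNReal.ofReal (Real.exp ((k.1 : ℝ) * θ.1 + (k.2 : ℝ) * θ.2)) *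
    occ A (x.1, x.2, j) (k.1, k.2, j')

/-- `𝒟_x`: the interior of the set where `Φ_x` is (entrywise) finite. -/
noncomputable def domPhi (A : ℤ → ℤ → Matrix (Fin s₀) (Fin s₀) ℝ) (x : ℕ × ℕ) : Set (ℝ × ℝ) :=
  interior {θ : ℝ × ℝ | ∀ j j', Phi A x θ j j' ≠ ⊤}

/-! ## QBD blocks and rate matrices -/

/-- Block `A^{(1)}_i`: matrix indexed by `ℤ₊ × S₀`, block tridiagonal with blocks `A_{i,·}`. -/
noncomputable def A1blk (A : ℤ → ℤ → Matrix (Fin s₀) (Fin s₀) ℝ) (i : ℤ) :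
    (ℕ × Fin s₀) → (ℕ × Fin s₀) → ℝ≥0∞ :=
  fun y y' => ENNReal.ofReal (A i ((y'.1 : ℤ) - (y.1 : ℤ)) y.2 y'.2)

/-- Block `A^{(2)}_i`: matrix indexed by `ℤ₊ × S₀`, block tridiagonal with blocks `A_{·,i}`. -/
noncomputable def A2blk (A : ℤ → ℤ → Matrix (Fin s₀) (Fin s₀) ℝ) (i : ℤ) :
    (ℕ × Fin s₀) → (ℕ × Fin s₀) → ℝ≥0∞ :=
  fun y y' => ENNReal.ofReal (A ((y'.1 : ℤ) - (y.1 : ℤ)) i y.2 y'.2)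

/-- Block `A^{(1,1)}_d`, indexed by the phase space `ℤ × S₀` of the QBD representation with
level `min{X₁,X₂}` and phase `(X₁−X₂, J)`: from a state with phase `k`, a jump `(i,l)` moves
the phase to `k+i−l` and the level by `min(max(k,0)+i, max(−k,0)+l)`. -/
noncomputable def A11blk (A : ℤ → ℤ → Matrix (Fin s₀) (Fin s₀) ℝ) (d : ℤ) :
    (ℤ × Fin s₀) → (ℤ × Fin s₀) → ℝ≥0∞ :=
  fun y y' => ∑ i ∈ Finset.Icc (-1 : ℤ) 1, ∑ l ∈ Finset.Icc (-1 : ℤ) 1,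
    if y'.1 = y.1 + i - l ∧ d = min (max y.1 0 + i) (max (-y.1) 0 + l) then
      ENNReal.ofReal (A i l y.2 y'.2) else 0

/-! ## Radii of convergence of the generating functions of the occupation measures -/

/-- Radius of convergence `r^{(1)}_{y,(x₂',j')}` of `Σ_k q̃_{y,(k,x₂',j')} z^k`. -/
noncomputable def r1 (A : ℤ → ℤ → Matrix (Fin s₀) (Fin s₀) ℝ) (y : ℕ × ℕ × Fin s₀)
    (x₂' : ℕ) (j' : Fin s₀) : ℝ≥0∞ :=
  sSup {r : ℝ≥0∞ | (∑' k : ℕ, r ^ k * occ A y (k, x₂', j')) ≠ ⊤}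

/-- Radius of convergence `r^{(2)}_{y,(x₁',j')}` of `Σ_k q̃_{y,(x₁',k,j')} z^k`. -/
noncomputable def r2 (A : ℤ → ℤ → Matrix (Fin s₀) (Fin s₀) ℝ) (y : ℕ × ℕ × Fin s₀)
    (x₁' : ℕ) (j' : Fin s₀) : ℝ≥0∞ :=
  sSup {r : ℝ≥0∞ | (∑' k : ℕ, r ^ k * occ A y (x₁', k, j')) ≠ ⊤}

/-- Radius of convergence `r^{(1,1)}_{(k,j),(k',j')}` of
`φ̂^{(1,1)}_{(k,j),(k',j')}(z) = Σ_l q̃_{(k∨0,−(k∧0),j),(l+(k'∨0),l−(k'∧0),j')} z^l`. -/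
noncomputable def r11 (A : ℤ → ℤ → Matrix (Fin s₀) (Fin s₀) ℝ) (k : ℤ) (j : Fin s₀)
    (k' : ℤ) (j' : Fin s₀) : ℝ≥0∞ :=
  sSup {r : ℝ≥0∞ | (∑' l : ℕ,
    r ^ l * occ A ((max k 0).toNat, (-(min k 0)).toNat, j)
      (l + (max k' 0).toNat, l + (-(min k' 0)).toNat, j')) ≠ ⊤}

/-! ## The complex matrix function Ĉ(z,w) -/

/-- `Ĉ(z,w) = Σ_{i,j∈{−1,0,1}} zⁱ wʲ A_{i,j}` as a complex matrix. -/
noncomputable def Chat (A : ℤ → ℤ → Matrix (Fin s₀) (Fin s₀) ℝ) (z w : ℂ) :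
    Matrix (Fin s₀) (Fin s₀) ℂ :=
  ∑ i ∈ Finset.Icc (-1 : ℤ) 1, ∑ j ∈ Finset.Icc (-1 : ℤ) 1,
    (z ^ i * w ^ j) • (A i j).map Complex.ofReal

/-! ## The lifted chain `ᶜY` (quotients and remainders mod `c`) -/

/-- The block `ᶜA_{i,j}` of the lifted 2d-MMRW, expressed via the original blocks:
`ᶜA_{i,j}((m₁,m₂,a),(m₁',m₂',b)) = A_{c₁ i + (m₁'−m₁), c₂ j + (m₂'−m₂)}(a,b)`. -/
noncomputable def cA (A : ℤ → ℤ → Matrix (Fin s₀) (Fin s₀) ℝ) (c₁ c₂ : ℕ) (i j : ℤ) :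
    Matrix (Fin c₁ × Fin c₂ × Fin s₀) (Fin c₁ × Fin c₂ × Fin s₀) ℝ :=
  Matrix.of fun y y' =>
    A ((c₁ : ℤ) * i + (((y'.1 : ℕ) : ℤ) - ((y.1 : ℕ) : ℤ)))
      ((c₂ : ℤ) * j + (((y'.2.1 : ℕ) : ℤ) - ((y.2.1 : ℕ) : ℤ))) y.2.2 y'.2.2

/-- `ᶜA_{*,*}(θ₁,θ₂) = Σ_{i,j} e^{iθ₁+jθ₂} ᶜA_{i,j}`. -/
noncomputable def cAss (A : ℤ → ℤ → Matrix (Fin s₀) (Fin s₀) ℝ) (c₁ c₂ : ℕ) (θ₁ θ₂ : ℝ) :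
    Matrix (Fin c₁ × Fin c₂ × Fin s₀) (Fin c₁ × Fin c₂ × Fin s₀) ℝ :=
  ∑ i ∈ Finset.Icc (-1 : ℤ) 1, ∑ j ∈ Finset.Icc (-1 : ℤ) 1,
    Real.exp ((i : ℝ) * θ₁ + (j : ℝ) * θ₂) • cA A c₁ c₂ i j


/-! ## Auxiliary machinery for the proof of Statement 13 -/

section Aux

variable {s₀ : ℕ}

private lemma ker_eq_zero' {A : ℤ → ℤ → Matrix (Fin s₀) (Fin s₀) ℝ} (hA : IsMMRW A)
    {y y' : ℤ × ℤ × Fin s₀}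
    (h : y'.1 - y.1 ∉ Finset.Icc (-1 : ℤ) 1 ∨ y'.2.1 - y.2.1 ∉ Finset.Icc (-1 : ℤ) 1) :
    ker A y y' = 0 := by
  unfold ker
  rw [hA.skipfree _ _ h]
  simp

private def shiftE (u v : ℤ) (s₀ : ℕ) : (ℤ × ℤ × Fin s₀) ≃ (ℤ × ℤ × Fin s₀) where
  toFun p := (p.1 + u, p.2.1 + v, p.2.2)
  invFun p := (p.1 - u, p.2.1 - v, p.2.2)
  left_inv p := by obtain ⟨a, b, c⟩ := p; simp
  right_inv p := by obtain ⟨a, b, c⟩ := p; simp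

private lemma kpow_shift {A : ℤ → ℤ → Matrix (Fin s₀) (Fin s₀) ℝ} (u v : ℤ) :
    ∀ (n : ℕ) (y y' : ℤ × ℤ × Fin s₀),
      kpow (ker A) n (y.1 + u, y.2.1 + v, y.2.2) (y'.1 + u, y'.2.1 + v, y'.2.2)
        = kpow (ker A) n y y'
  | 0, y, y' => by
    obtain ⟨y1, y2, y3⟩ := y; obtain ⟨y1', y2', y3'⟩ := y'
    simp only [kpow]
    refine if_congr ?_ rfl rfl
    simp only [Prod.mk.injEq]
    constructor
    · rintro ⟨h1, h2, h3⟩; exact ⟨by omega, by omega, h3⟩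
    · rintro ⟨h1, h2, h3⟩; exact ⟨by omega, by omega, h3⟩
  | n+1, y, y' => by
    show kmul (ker A) (kpow (ker A) n) _ _ = kmul (ker A) (kpow (ker A) n) y y'
    unfold kmul
    rw [← Equiv.tsum_eq (shiftE u v s₀)]
    refine tsum_congr fun p => ?_
    obtain ⟨p1, p2, p3⟩ := p
    have h1 : ker A (y.1 + u, y.2.1 + v, y.2.2) (shiftE u v s₀ (p1, p2, p3))
        = ker A y (p1, p2, p3) := by
      simp only [shiftE, Equiv.coe_fn_mk, ker, add_sub_add_right_eq_sub]
    rw [h1]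
    congr 1
    exact kpow_shift u v n (p1, p2, p3) y'

/-- `n`-step transition weights of the MMRW, as functions of the displacement. -/
private noncomputable def Qe (A : ℤ → ℤ → Matrix (Fin s₀) (Fin s₀) ℝ)
    (n : ℕ) (k l : ℤ) (a b : Fin s₀) : ℝ≥0∞ :=
  kpow (ker A) n ((0 : ℤ), (0 : ℤ), a) (k, l, b)

private lemma Qe_succ {A : ℤ → ℤ → Matrix (Fin s₀) (Fin s₀) ℝ} (hA : IsMMRW A)
    (n : ℕ) (k l : ℤ) (a b : Fin s₀) :
    Qe A (n+1) k l a b = ∑ i ∈ Finset.Icc (-1:ℤ) 1, ∑ j ∈ Finset.Icc (-1:ℤ) 1, ∑ c,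
      ENNReal.ofReal (A i j a c) * Qe A n (k - i) (l - j) c b := by
  have h0 : Qe A (n+1) k l a b
      = ∑' y₁ : ℤ × ℤ × Fin s₀, ker A ((0:ℤ),(0:ℤ),a) y₁ * kpow (ker A) n y₁ (k,l,b) := rfl
  rw [h0, tsum_eq_sum (s := (Finset.Icc (-1:ℤ) 1) ×ˢ ((Finset.Icc (-1:ℤ) 1) ×ˢ
      (Finset.univ : Finset (Fin s₀)))) ?_]
  · rw [Finset.sum_product]
    refine Finset.sum_congr rfl fun i hi => ?_
    rw [Finset.sum_product]
    refine Finset.sum_congr rfl fun j hj => ?_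
    refine Finset.sum_congr rfl fun c _ => ?_
    congr 1
    · simp [ker]
    · have h2 := kpow_shift (A := A) i j n ((0:ℤ), (0:ℤ), c) (k - i, l - j, b)
      simpa [Qe] using h2
  · intro y₁ hy₁
    have hmem : y₁.1 ∉ Finset.Icc (-1:ℤ) 1 ∨ y₁.2.1 ∉ Finset.Icc (-1:ℤ) 1 := by
      by_contra hc
      push_neg at hc
      exact hy₁ (Finset.mem_product.mpr ⟨hc.1, Finset.mem_product.mpr ⟨hc.2, Finset.mem_univ _⟩⟩)
    have hker : ker A ((0:ℤ),(0:ℤ),a) y₁ = 0 := ker_eq_zero' hA (by simpa using hmem)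
    rw [hker, zero_mul]

private def embShift (y : ℤ × ℤ × Fin s₀) : (ℤ × ℤ × Fin s₀) ↪ (ℤ × ℤ × Fin s₀) :=
  ⟨fun p => (y.1 + p.1, y.2.1 + p.2.1, p.2.2), by
    rintro ⟨a1, a2, a3⟩ ⟨b1, b2, b3⟩ h
    simp only [Prod.mk.injEq] at h ⊢
    exact ⟨by omega, by omega, h.2.2⟩⟩

private lemma ker_rowsum {A : ℤ → ℤ → Matrix (Fin s₀) (Fin s₀) ℝ} (hA : IsMMRW A)
    (y : ℤ × ℤ × Fin s₀) : ∑' y', ker A y y' = 1 := by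
  rw [tsum_eq_sum (s := ((Finset.Icc (-1:ℤ) 1) ×ˢ ((Finset.Icc (-1:ℤ) 1) ×ˢ
      (Finset.univ : Finset (Fin s₀)))).map (embShift y)) ?_]
  · rw [Finset.sum_map]
    have h1 : ∀ p ∈ (Finset.Icc (-1:ℤ) 1) ×ˢ ((Finset.Icc (-1:ℤ) 1) ×ˢ
        (Finset.univ : Finset (Fin s₀))),
        ker A y (embShift y p) = ENNReal.ofReal (A p.1 p.2.1 y.2.2 p.2.2) := by
      intro p _
      show ENNReal.ofReal (A (y.1 + p.1 - y.1) (y.2.1 + p.2.1 - y.2.1) y.2.2 p.2.2) = _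
      simp [add_sub_cancel_left]
    rw [Finset.sum_congr rfl h1, Finset.sum_product]
    calc ∑ i ∈ Finset.Icc (-1:ℤ) 1, ∑ q ∈ (Finset.Icc (-1:ℤ) 1) ×ˢ
            (Finset.univ : Finset (Fin s₀)), ENNReal.ofReal (A i q.1 y.2.2 q.2)
        = ∑ i ∈ Finset.Icc (-1:ℤ) 1, ∑ j ∈ Finset.Icc (-1:ℤ) 1, ∑ c,
            ENNReal.ofReal (A i j y.2.2 c) := by
          refine Finset.sum_congr rfl fun i _ => ?_
          rw [Finset.sum_product]
      _ = ∑ i ∈ Finset.Icc (-1:ℤ) 1, ∑ j ∈ Finset.Icc (-1:ℤ) 1,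
            ENNReal.ofReal (∑ c, A i j y.2.2 c) := by
          refine Finset.sum_congr rfl fun i _ => Finset.sum_congr rfl fun j _ => ?_
          rw [ENNReal.ofReal_sum_of_nonneg (fun c _ => hA.nonneg i j y.2.2 c)]
      _ = ∑ i ∈ Finset.Icc (-1:ℤ) 1, ENNReal.ofReal (∑ j ∈ Finset.Icc (-1:ℤ) 1,
            ∑ c, A i j y.2.2 c) := by
          refine Finset.sum_congr rfl fun i _ => ?_
          rw [ENNReal.ofReal_sum_of_nonneg
            (fun j _ => Finset.sum_nonneg fun c _ => hA.nonneg i j y.2.2 c)]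
      _ = ENNReal.ofReal (∑ i ∈ Finset.Icc (-1:ℤ) 1, ∑ j ∈ Finset.Icc (-1:ℤ) 1,
            ∑ c, A i j y.2.2 c) := by
          rw [ENNReal.ofReal_sum_of_nonneg
            (fun i _ => Finset.sum_nonneg fun j _ => Finset.sum_nonneg fun c _ =>
              hA.nonneg i j y.2.2 c)]
      _ = 1 := by rw [hA.stochastic y.2.2, ENNReal.ofReal_one]
  · intro y' hy'
    by_cases h1 : y'.1 - y.1 ∈ Finset.Icc (-1:ℤ) 1 ∧ y'.2.1 - y.2.1 ∈ Finset.Icc (-1:ℤ) 1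
    · exfalso
      apply hy'
      refine Finset.mem_map.mpr ⟨(y'.1 - y.1, y'.2.1 - y.2.1, y'.2.2),
        Finset.mem_product.mpr ⟨h1.1, Finset.mem_product.mpr ⟨h1.2, Finset.mem_univ _⟩⟩, ?_⟩
      show (y.1 + (y'.1 - y.1), y.2.1 + (y'.2.1 - y.2.1), y'.2.2) = y'
      obtain ⟨a, b, c⟩ := y'
      simp only [Prod.mk.injEq]
      exact ⟨by omega, by omega, trivial⟩
    · exact ker_eq_zero' hA (by tauto)

private lemma kpow_rowsum_le {A : ℤ → ℤ → Matrix (Fin s₀) (Fin s₀) ℝ} (hA : IsMMRW A) :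
    ∀ (n : ℕ) (y : ℤ × ℤ × Fin s₀), ∑' y', kpow (ker A) n y y' ≤ 1
  | 0, y => by
    have hval : ∀ y' : ℤ × ℤ × Fin s₀, kpow (ker A) 0 y y' = if y = y' then (1:ℝ≥0∞) else 0 :=
      fun _ => rfl
    calc ∑' y', kpow (ker A) 0 y y'
        = ∑' y', if y = y' then (1:ℝ≥0∞) else 0 := tsum_congr fun y' => hval y'
      _ = ∑ y' ∈ {y}, if y = y' then (1:ℝ≥0∞) else 0 :=
          tsum_eq_sum (fun y' hy' => if_neg fun h => hy' (by simp [h]))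
      _ ≤ 1 := by simp
  | n+1, y => by
    show ∑' y', kmul (ker A) (kpow (ker A) n) y y' ≤ 1
    unfold kmul
    rw [ENNReal.tsum_comm]
    calc ∑' y₁, ∑' y', ker A y y₁ * kpow (ker A) n y₁ y'
        = ∑' y₁, ker A y y₁ * ∑' y', kpow (ker A) n y₁ y' := by
          refine tsum_congr fun y₁ => ?_
          rw [ENNReal.tsum_mul_left]
      _ ≤ ∑' y₁, ker A y y₁ * 1 :=
          ENNReal.tsum_le_tsum fun y₁ => mul_le_mul_right (kpow_rowsum_le hA n y₁) _
      _ = ∑' y₁, ker A y y₁ := by simp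
      _ = 1 := ker_rowsum hA y

private lemma Qe_le_one {A : ℤ → ℤ → Matrix (Fin s₀) (Fin s₀) ℝ} (hA : IsMMRW A)
    {n : ℕ} {k l : ℤ} {a b : Fin s₀} : Qe A n k l a b ≤ 1 :=
  le_trans (ENNReal.le_tsum (f := fun y' => kpow (ker A) n ((0:ℤ), (0:ℤ), a) y') (k, l, b))
    (kpow_rowsum_le hA n ((0:ℤ), (0:ℤ), a))

private lemma Qe_ne_top {A : ℤ → ℤ → Matrix (Fin s₀) (Fin s₀) ℝ} (hA : IsMMRW A)
    {n : ℕ} {k l : ℤ} {a b : Fin s₀} : Qe A n k l a b ≠ ⊤ :=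
  (lt_of_le_of_lt (Qe_le_one hA) ENNReal.one_lt_top).ne

private lemma Qe_eq_zero {A : ℤ → ℤ → Matrix (Fin s₀) (Fin s₀) ℝ} (hA : IsMMRW A)
    (n : ℕ) : ∀ (k l : ℤ) (a b : Fin s₀),
      (k ∉ Finset.Icc (-(n:ℤ)) n ∨ l ∉ Finset.Icc (-(n:ℤ)) n) → Qe A n k l a b = 0 := by
  induction n with
  | zero =>
    intro k l a b h
    simp only [Nat.cast_zero, neg_zero, Finset.Icc_self, Finset.mem_singleton] at h
    have hne : ¬ (((0:ℤ), (0:ℤ), a) = (k, l, b)) := by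
      rintro h'
      simp only [Prod.mk.injEq] at h'
      rcases h with h | h
      · exact h h'.1.symm
      · exact h h'.2.1.symm
    show kpow (ker A) 0 _ _ = 0
    simp only [kpow]
    rw [if_neg hne]
  | succ n ih =>
    intro k l a b h
    rw [Qe_succ hA]
    refine Finset.sum_eq_zero fun i hi => Finset.sum_eq_zero fun j hj =>
      Finset.sum_eq_zero fun c _ => ?_
    rw [ih (k - i) (l - j) c b ?_, mul_zero]
    simp only [Finset.mem_Icc] at hi hj h ⊢
    push_cast at h ⊢
    rcases h with h | h
    · left; omega
    · right; omega

/-- Real version of `Qe`. -/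
private noncomputable def Qr (A : ℤ → ℤ → Matrix (Fin s₀) (Fin s₀) ℝ)
    (n : ℕ) (k l : ℤ) : Matrix (Fin s₀) (Fin s₀) ℝ :=
  Matrix.of fun a b => (Qe A n k l a b).toReal

private lemma Qr_nonneg {A : ℤ → ℤ → Matrix (Fin s₀) (Fin s₀) ℝ}
    {n : ℕ} {k l : ℤ} {a b : Fin s₀} : 0 ≤ Qr A n k l a b :=
  ENNReal.toReal_nonneg

private lemma Qr_eq_zero {A : ℤ → ℤ → Matrix (Fin s₀) (Fin s₀) ℝ} (hA : IsMMRW A)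
    {n : ℕ} {k l : ℤ} (h : k ∉ Finset.Icc (-(n:ℤ)) n ∨ l ∉ Finset.Icc (-(n:ℤ)) n) :
    Qr A n k l = 0 := by
  ext a b
  show (Qe A n k l a b).toReal = 0
  rw [Qe_eq_zero hA n k l a b h]
  simp


private lemma Qr_succ {A : ℤ → ℤ → Matrix (Fin s₀) (Fin s₀) ℝ} (hA : IsMMRW A)
    (n : ℕ) (k l : ℤ) :
    Qr A (n+1) k l = ∑ i ∈ Finset.Icc (-1:ℤ) 1, ∑ j ∈ Finset.Icc (-1:ℤ) 1,
      A i j * Qr A n (k - i) (l - j) := by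
  ext a b
  have hterm : ∀ (i j : ℤ) (c : Fin s₀),
      ENNReal.ofReal (A i j a c) * Qe A n (k - i) (l - j) c b ≠ ⊤ :=
    fun i j c => ENNReal.mul_ne_top ENNReal.ofReal_ne_top (Qe_ne_top hA)
  have h1 : ∀ i j : ℤ,
      (∑ c, ENNReal.ofReal (A i j a c) * Qe A n (k - i) (l - j) c b).toReal
        = ∑ c, A i j a c * Qr A n (k - i) (l - j) c b := by
    intro i j
    rw [ENNReal.toReal_sum (fun c _ => hterm i j c)]
    refine Finset.sum_congr rfl fun c _ => ?_
    rw [ENNReal.toReal_mul, ENNReal.toReal_ofReal (hA.nonneg i j a c)]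
    rfl
  have h2 : ∀ i : ℤ,
      (∑ j ∈ Finset.Icc (-1:ℤ) 1, ∑ c,
          ENNReal.ofReal (A i j a c) * Qe A n (k - i) (l - j) c b).toReal
        = ∑ j ∈ Finset.Icc (-1:ℤ) 1, ∑ c, A i j a c * Qr A n (k - i) (l - j) c b := by
    intro i
    rw [ENNReal.toReal_sum (fun j _ =>
      (ENNReal.sum_lt_top.mpr fun c _ => (hterm i j c).lt_top).ne)]
    exact Finset.sum_congr rfl fun j _ => h1 i j
  calc Qr A (n+1) k l a b = (Qe A (n+1) k l a b).toReal := rfl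
    _ = ∑ i ∈ Finset.Icc (-1:ℤ) 1, ∑ j ∈ Finset.Icc (-1:ℤ) 1, ∑ c,
        A i j a c * Qr A n (k - i) (l - j) c b := by
      rw [Qe_succ hA]
      rw [ENNReal.toReal_sum (fun i _ =>
        (ENNReal.sum_lt_top.mpr fun j _ =>
          (ENNReal.sum_lt_top.mpr fun c _ => (hterm i j c).lt_top)).ne)]
      exact Finset.sum_congr rfl fun i _ => h2 i
    _ = (∑ i ∈ Finset.Icc (-1:ℤ) 1, ∑ j ∈ Finset.Icc (-1:ℤ) 1,
        A i j * Qr A n (k - i) (l - j)) a b := by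
      simp [Matrix.sum_apply, Matrix.mul_apply]

/-- The box `[-n,n]²` of possible displacements after `n` steps. -/
private noncomputable def Bxx (n : ℕ) : Finset (ℤ × ℤ) :=
  (Finset.Icc (-(n:ℤ)) n) ×ˢ (Finset.Icc (-(n:ℤ)) n)

private lemma Qr_eq_zero' {A : ℤ → ℤ → Matrix (Fin s₀) (Fin s₀) ℝ} (hA : IsMMRW A)
    {n : ℕ} {q : ℤ × ℤ} (h : q ∉ Bxx n) : Qr A n q.1 q.2 = 0 := by
  refine Qr_eq_zero hA ?_
  by_contra hc
  push_neg at hc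
  exact h (Finset.mem_product.mpr ⟨hc.1, hc.2⟩)

private lemma map_ofReal_mul (M N : Matrix (Fin s₀) (Fin s₀) ℝ) :
    (M * N).map Complex.ofReal = M.map Complex.ofReal * N.map Complex.ofReal := by
  have h : (Complex.ofReal : ℝ → ℂ) = ⇑Complex.ofRealHom := rfl
  rw [h, Matrix.map_mul]

private lemma map_ofReal_sum {ι : Type*} (s : Finset ι) (f : ι → Matrix (Fin s₀) (Fin s₀) ℝ) :
    (∑ i ∈ s, f i).map Complex.ofReal = ∑ i ∈ s, (f i).map Complex.ofReal := by
  ext a b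
  simp [Matrix.map_apply, Matrix.sum_apply]

/-- The key expansion: `Ĉ(z,w)ⁿ = Σ_{(k,l)∈[-n,n]²} z^k w^l Q_{n,k,l}`. -/
private lemma chat_pow {A : ℤ → ℤ → Matrix (Fin s₀) (Fin s₀) ℝ} (hA : IsMMRW A)
    (z w : ℂ) (hz : z ≠ 0) (hw : w ≠ 0) (n : ℕ) :
    Chat A z w ^ n
      = ∑ q ∈ Bxx n, (z ^ q.1 * w ^ q.2) • (Qr A n q.1 q.2).map Complex.ofReal := by
  induction n with
  | zero =>
    have hB : Bxx 0 = {((0:ℤ), (0:ℤ))} := by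
      simp [Bxx, Finset.Icc_self, Finset.singleton_product_singleton]
    rw [pow_zero, hB, Finset.sum_singleton]
    have hQ : Qr A 0 0 0 = (1 : Matrix (Fin s₀) (Fin s₀) ℝ) := by
      ext a b
      show (kpow (ker A) 0 ((0:ℤ),(0:ℤ),a) ((0:ℤ),(0:ℤ),b)).toReal = _
      simp only [kpow, Prod.mk.injEq, true_and, Matrix.one_apply]
      by_cases hab : a = b
      · simp [hab]
      · rw [if_neg (by simpa using hab), if_neg hab]
        simp
    rw [hQ, Matrix.map_one Complex.ofReal Complex.ofReal_zero Complex.ofReal_one]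
    simp
  | succ n ih =>
    have hchat : Chat A z w = ∑ i ∈ Finset.Icc (-1:ℤ) 1, ∑ j ∈ Finset.Icc (-1:ℤ) 1,
        (z ^ i * w ^ j) • (A i j).map Complex.ofReal := rfl
    rw [pow_succ', ih, hchat, Finset.sum_mul, Finset.sum_congr rfl (fun i hi => Finset.sum_mul ..)]
    have hterm : ∀ i ∈ Finset.Icc (-1:ℤ) 1, ∀ j ∈ Finset.Icc (-1:ℤ) 1,
        ((z ^ i * w ^ j) • (A i j).map Complex.ofReal) *
          (∑ q ∈ Bxx n, (z ^ q.1 * w ^ q.2) • (Qr A n q.1 q.2).map Complex.ofReal)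
        = ∑ q' ∈ Bxx (n+1), (z ^ q'.1 * w ^ q'.2) •
            ((A i j).map Complex.ofReal * (Qr A n (q'.1 - i) (q'.2 - j)).map Complex.ofReal) := by
      intro i hi j hj
      rw [Finset.mul_sum]
      have hstep : ∀ q ∈ Bxx n,
          ((z ^ i * w ^ j) • (A i j).map Complex.ofReal) *
            ((z ^ q.1 * w ^ q.2) • (Qr A n q.1 q.2).map Complex.ofReal)
          = (z ^ (i + q.1) * w ^ (j + q.2)) •
              ((A i j).map Complex.ofReal * (Qr A n q.1 q.2).map Complex.ofReal) := by
        intro q _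
        rw [smul_mul_smul_comm, mul_mul_mul_comm, ← zpow_add₀ hz, ← zpow_add₀ hw]
      rw [Finset.sum_congr rfl hstep]
      -- reindex
      have himg : (Bxx n).image (fun q : ℤ × ℤ => (q.1 + i, q.2 + j)) ⊆ Bxx (n+1) := by
        intro q' hq'
        obtain ⟨q, hq, rfl⟩ := Finset.mem_image.mp hq'
        simp only [Bxx, Finset.mem_product, Finset.mem_Icc] at hq ⊢
        simp only [Finset.mem_Icc] at hi hj
        push_cast
        push_cast at hq
        omega
      rw [← Finset.sum_subset himg ?_]
      · rw [Finset.sum_image ?_]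
        · refine Finset.sum_congr rfl fun q hq => ?_
          rw [add_sub_cancel_right, add_sub_cancel_right, add_comm q.1 i, add_comm q.2 j]
        · intro q hq q' hq' hqq
          simp only [Prod.mk.injEq] at hqq
          exact Prod.ext (by omega) (by omega)
      · intro q' hq1 hq2
        have hnot : (q'.1 - i, q'.2 - j) ∉ Bxx n := by
          intro hc
          refine hq2 (Finset.mem_image.mpr ⟨(q'.1 - i, q'.2 - j), hc, ?_⟩)
          exact Prod.ext (by omega) (by omega)
        rw [Qr_eq_zero' hA hnot]
        rw [Matrix.map_zero Complex.ofReal Complex.ofReal_zero, mul_zero, smul_zero]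
    rw [Finset.sum_congr rfl (fun i hi => Finset.sum_congr rfl (fun j hj => hterm i hi j hj))]
    have hQC : ∀ q' ∈ Bxx (n+1),
        (z ^ q'.1 * w ^ q'.2) • (Qr A (n+1) q'.1 q'.2).map Complex.ofReal
          = ∑ i ∈ Finset.Icc (-1:ℤ) 1, ∑ j ∈ Finset.Icc (-1:ℤ) 1,
              (z ^ q'.1 * w ^ q'.2) •
                ((A i j).map Complex.ofReal *
                  (Qr A n (q'.1 - i) (q'.2 - j)).map Complex.ofReal) := by
      intro q' _
      rw [Qr_succ hA, map_ofReal_sum, Finset.smul_sum]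
      refine Finset.sum_congr rfl fun i _ => ?_
      rw [map_ofReal_sum, Finset.smul_sum]
      exact Finset.sum_congr rfl fun j _ => by rw [map_ofReal_mul]
    calc ∑ i ∈ Finset.Icc (-1:ℤ) 1, ∑ j ∈ Finset.Icc (-1:ℤ) 1, ∑ q' ∈ Bxx (n+1),
            (z ^ q'.1 * w ^ q'.2) • ((A i j).map Complex.ofReal *
              (Qr A n (q'.1 - i) (q'.2 - j)).map Complex.ofReal)
        = ∑ i ∈ Finset.Icc (-1:ℤ) 1, ∑ q' ∈ Bxx (n+1), ∑ j ∈ Finset.Icc (-1:ℤ) 1,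
            (z ^ q'.1 * w ^ q'.2) • ((A i j).map Complex.ofReal *
              (Qr A n (q'.1 - i) (q'.2 - j)).map Complex.ofReal) :=
          Finset.sum_congr rfl fun i _ => Finset.sum_comm
      _ = ∑ q' ∈ Bxx (n+1), ∑ i ∈ Finset.Icc (-1:ℤ) 1, ∑ j ∈ Finset.Icc (-1:ℤ) 1,
            (z ^ q'.1 * w ^ q'.2) • ((A i j).map Complex.ofReal *
              (Qr A n (q'.1 - i) (q'.2 - j)).map Complex.ofReal) := Finset.sum_comm
      _ = ∑ q' ∈ Bxx (n+1), (z ^ q'.1 * w ^ q'.2) • (Qr A (n+1) q'.1 q'.2).map Complex.ofReal :=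
          (Finset.sum_congr rfl hQC).symm

/-- Real moment sums `Σ_{(k,l)} x^k y^l Q_{n,k,l}`. -/
private noncomputable def Sm (A : ℤ → ℤ → Matrix (Fin s₀) (Fin s₀) ℝ) (x y : ℝ) (n : ℕ) :
    Matrix (Fin s₀) (Fin s₀) ℝ :=
  Matrix.of fun a b => ∑ q ∈ Bxx n, x ^ q.1 * y ^ q.2 * Qr A n q.1 q.2 a b

private lemma Sm_nonneg {A : ℤ → ℤ → Matrix (Fin s₀) (Fin s₀) ℝ} {x y : ℝ}
    (hx : 0 < x) (hy : 0 < y) {n : ℕ} {a b : Fin s₀} : 0 ≤ Sm A x y n a b :=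
  Finset.sum_nonneg fun q _ =>
    mul_nonneg (mul_nonneg (zpow_nonneg hx.le _) (zpow_nonneg hy.le _)) Qr_nonneg

private lemma Sm_single_le {A : ℤ → ℤ → Matrix (Fin s₀) (Fin s₀) ℝ} {x y : ℝ}
    (hx : 0 < x) (hy : 0 < y) {n : ℕ} {q : ℤ × ℤ} (hq : q ∈ Bxx n) (a b : Fin s₀) :
    x ^ q.1 * y ^ q.2 * Qr A n q.1 q.2 a b ≤ Sm A x y n a b :=
  Finset.single_le_sum (f := fun q : ℤ × ℤ => x ^ q.1 * y ^ q.2 * Qr A n q.1 q.2 a b)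
    (fun q _ => mul_nonneg (mul_nonneg (zpow_nonneg hx.le _) (zpow_nonneg hy.le _)) Qr_nonneg) hq

private lemma chat_pow_real {A : ℤ → ℤ → Matrix (Fin s₀) (Fin s₀) ℝ} (hA : IsMMRW A)
    {x y : ℝ} (hx : 0 < x) (hy : 0 < y) (n : ℕ) :
    Chat A (x : ℂ) (y : ℂ) ^ n = (Sm A x y n).map Complex.ofReal := by
  rw [chat_pow hA _ _ (Complex.ofReal_ne_zero.mpr hx.ne') (Complex.ofReal_ne_zero.mpr hy.ne') n]
  ext a b
  simp only [Matrix.sum_apply, Matrix.smul_apply, Matrix.map_apply, Matrix.of_apply,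
    smul_eq_mul, Sm, Complex.ofReal_sum, Complex.ofReal_mul, Complex.ofReal_zpow]

private lemma Sm_mul {A : ℤ → ℤ → Matrix (Fin s₀) (Fin s₀) ℝ} (hA : IsMMRW A)
    {x y : ℝ} (hx : 0 < x) (hy : 0 < y) (n₁ n₂ : ℕ) :
    Sm A x y (n₁ + n₂) = Sm A x y n₁ * Sm A x y n₂ := by
  have h : (Sm A x y (n₁ + n₂)).map Complex.ofReal
      = (Sm A x y n₁ * Sm A x y n₂).map Complex.ofReal := by
    rw [map_ofReal_mul, ← chat_pow_real hA hx hy, ← chat_pow_real hA hx hy,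
      ← chat_pow_real hA hx hy, pow_add]
  ext a b
  have h2 := congrFun (congrFun (congrArg (fun M : Matrix (Fin s₀) (Fin s₀) ℂ => (M : _)) h) a) b
  simpa [Matrix.map_apply, Complex.ofReal_inj] using h2

private lemma rpow_aux (x : ℝ) (hx : 0 ≤ x) {m : ℕ} (hm : 0 < m) (k : ℕ) :
    (ENNReal.ofReal (x ^ (k+1))) ^ (1 / ((m * (k+1) : ℕ) : ℝ))
      = (ENNReal.ofReal x) ^ (1 / (m : ℝ)) := by
  rw [ENNReal.ofReal_pow hx, ← ENNReal.rpow_natCast (ENNReal.ofReal x) (k+1),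
    ← ENNReal.rpow_mul]
  congr 1
  have hm' : ((m:ℝ)) ≠ 0 := Nat.cast_ne_zero.mpr hm.ne'
  have hk' : ((k:ℝ) + 1) ≠ 0 := by positivity
  push_cast
  field_simp

end Aux


/-- Proposition 4.5: under Assumption 1, for complex `z,w` with
`z ≠ 0` and `w ≠ 0`, if `|z| ≠ z` or `|w| ≠ w`, then
`spr(Ĉ(z,w)) < spr(Ĉ(|z|,|w|))`. -/
theorem sprC_strict_lt {s₀ : ℕ} (hs : 0 < s₀)
    (A : ℤ → ℤ → Matrix (Fin s₀) (Fin s₀) ℝ) (hA : IsMMRW A) (h1 : Assumption1 A)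
    (z w : ℂ) (hz : z ≠ 0) (hw : w ≠ 0)
    (h : ((‖z‖ : ℝ) : ℂ) ≠ z ∨ ((‖w‖ : ℝ) : ℂ) ≠ w) :
    sprC (Chat A z w) <
      sprC (Chat A ((‖z‖ : ℝ) : ℂ) ((‖w‖ : ℝ) : ℂ)) := by
  classical
  haveI hFin : Nonempty (Fin s₀) := ⟨⟨0, hs⟩⟩
  set a₀ : Fin s₀ := ⟨0, hs⟩ with ha₀
  have haz : 0 < ‖z‖ := norm_pos_iff.mpr hz
  have haw : 0 < ‖w‖ := norm_pos_iff.mpr hw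
  set az : ℝ := ‖z‖ with hazdef
  set aw : ℝ := ‖w‖ with hawdef
  -- choose the "direction" d in which alignment fails
  obtain ⟨d, hd1, hd0, hray⟩ :
      ∃ d : ℤ × ℤ, d ∈ Bxx 1 ∧ d ≠ ((0:ℤ), (0:ℤ)) ∧
        ∀ q₀ q₁ : ℝ, 0 < q₀ → 0 < q₁ →
          ¬ SameRay ℝ ((q₀ : ℂ)) ((z ^ d.1 * w ^ d.2) * (q₁ : ℂ)) := by
    have key : ∀ u : ℂ, u ≠ 0 → ((‖u‖ : ℝ) : ℂ) ≠ u →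
        ∀ q₀ q₁ : ℝ, 0 < q₀ → 0 < q₁ → ¬ SameRay ℝ ((q₀ : ℂ)) (u * (q₁ : ℂ)) := by
      intro u hu habs q₀ q₁ h₀ h₁ hsr
      obtain ⟨r₁, r₂, hr₁, hr₂, hre⟩ := hsr.exists_pos
        (Complex.ofReal_ne_zero.mpr h₀.ne')
        (mul_ne_zero hu (Complex.ofReal_ne_zero.mpr h₁.ne'))
      apply habs
      have hre' : (r₁ : ℂ) * q₀ = (r₂ : ℂ) * (u * q₁) := by
        simpa [Complex.real_smul] using hre
      have hq1 : ((q₁ : ℂ)) ≠ 0 := Complex.ofReal_ne_zero.mpr h₁.ne'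
      have hr2 : ((r₂ : ℂ)) ≠ 0 := Complex.ofReal_ne_zero.mpr hr₂.ne'
      have hu' : u = ((r₁ * q₀ / (r₂ * q₁) : ℝ) : ℂ) := by
        push_cast
        field_simp
        linear_combination -hre'
      rw [hu', Complex.norm_real, Real.norm_eq_abs, abs_of_pos (by positivity)]
    rcases h with h | h
    · refine ⟨(1, 0), by simp [Bxx], by simp, ?_⟩
      intro q₀ q₁ h₀ h₁
      have hzw : z ^ (1:ℤ) * w ^ (0:ℤ) = z := by simp
      rw [hzw]
      exact key z hz h q₀ q₁ h₀ h₁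
    · refine ⟨(0, 1), by simp [Bxx], by simp, ?_⟩
      intro q₀ q₁ h₀ h₁
      have hzw : z ^ (0:ℤ) * w ^ (1:ℤ) = w := by simp
      rw [hzw]
      exact key w hw h q₀ q₁ h₀ h₁
  -- choose the power m where everything is strictly positive
  obtain ⟨m, hm1, hQpos⟩ : ∃ m : ℕ, 1 ≤ m ∧ ∀ a b : Fin s₀,
      0 < Qe A m 0 0 a b ∧ 0 < Qe A m d.1 d.2 a b := by
    have hex : ∀ p : Fin s₀ × Fin s₀, ∃ N, ∀ n ≥ N,
        0 < Qe A n 0 0 p.1 p.2 ∧ 0 < Qe A n d.1 d.2 p.1 p.2 := by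
      intro p
      obtain ⟨N₁, hN₁⟩ := h1 ((0:ℤ), (0:ℤ), p.1) ((0:ℤ), (0:ℤ), p.2)
      obtain ⟨N₂, hN₂⟩ := h1 ((0:ℤ), (0:ℤ), p.1) (d.1, d.2, p.2)
      exact ⟨max N₁ N₂, fun n hn =>
        ⟨hN₁ n (le_trans (le_max_left _ _) hn), hN₂ n (le_trans (le_max_right _ _) hn)⟩⟩
    choose N hN using hex
    refine ⟨1 + Finset.univ.sup N, Nat.le_add_right 1 _, fun a b => hN (a, b) _ ?_⟩
    have := Finset.le_sup (f := N) (Finset.mem_univ (a, b))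
    omega
  have hm0 : 0 < m := hm1
  have h00m : ((0:ℤ), (0:ℤ)) ∈ Bxx m := by
    simp only [Bxx, Finset.mem_product, Finset.mem_Icc]
    omega
  have hdm : d ∈ Bxx m := by
    simp only [Bxx, Finset.mem_product, Finset.mem_Icc] at hd1 ⊢
    omega
  set B := Chat A z w with hB
  set As := Chat A ((az : ℝ) : ℂ) ((aw : ℝ) : ℂ) with hAs
  have hAspow : ∀ n : ℕ, As ^ n = (Sm A az aw n).map Complex.ofReal :=
    fun n => chat_pow_real hA haz haw n
  have hBpow : ∀ n : ℕ, B ^ n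
      = ∑ q ∈ Bxx n, (z ^ q.1 * w ^ q.2) • (Qr A n q.1 q.2).map Complex.ofReal :=
    fun n => chat_pow hA z w hz hw n
  have hBentry : ∀ (n : ℕ) (a b : Fin s₀), (B ^ n) a b
      = ∑ q ∈ Bxx n, (z ^ q.1 * w ^ q.2) * ((Qr A n q.1 q.2 a b : ℝ) : ℂ) := by
    intro n a b
    rw [hBpow n]
    simp [Matrix.sum_apply, Matrix.smul_apply, Matrix.map_apply, smul_eq_mul]
  have hfg : ∀ (n : ℕ) (a b : Fin s₀) (q : ℤ × ℤ),
      ‖(z ^ q.1 * w ^ q.2) * ((Qr A n q.1 q.2 a b : ℝ) : ℂ)‖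
        = az ^ q.1 * aw ^ q.2 * Qr A n q.1 q.2 a b := by
    intro n a b q
    rw [norm_mul, norm_mul, norm_zpow, norm_zpow, Complex.norm_real, Real.norm_eq_abs,
      abs_of_nonneg (Qr_nonneg)]
  have hSm_entry : ∀ (n : ℕ) (a b : Fin s₀),
      Sm A az aw n a b = ∑ q ∈ Bxx n, az ^ q.1 * aw ^ q.2 * Qr A n q.1 q.2 a b :=
    fun n a b => rfl
  -- strict inequality at the power m, entrywise
  have hstrict : ∀ a b : Fin s₀, ‖(B ^ m) a b‖ < Sm A az aw m a b := by
    intro a b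
    obtain ⟨hq0, hq1⟩ := hQpos a b
    have hq₀ : 0 < Qr A m 0 0 a b := ENNReal.toReal_pos hq0.ne' (Qe_ne_top hA)
    have hq₁ : 0 < Qr A m d.1 d.2 a b := ENNReal.toReal_pos hq1.ne' (Qe_ne_top hA)
    set f : ℤ × ℤ → ℂ := fun q => (z ^ q.1 * w ^ q.2) * ((Qr A m q.1 q.2 a b : ℝ) : ℂ) with hf
    have hd0' : d ∈ (Bxx m).erase ((0:ℤ), (0:ℤ)) := Finset.mem_erase.mpr ⟨hd0, hdm⟩
    have hf0 : f ((0:ℤ),(0:ℤ)) = ((Qr A m 0 0 a b : ℝ) : ℂ) := by simp [hf]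
    have hkey : ‖f ((0:ℤ),(0:ℤ)) + f d‖ < ‖f ((0:ℤ),(0:ℤ))‖ + ‖f d‖ := by
      have hray' := hray (Qr A m 0 0 a b) (Qr A m d.1 d.2 a b) hq₀ hq₁
      refine lt_of_le_of_ne (norm_add_le _ _) fun hEq => hray' ?_
      have hsr := sameRay_iff_norm_add.mpr hEq
      rwa [hf0] at hsr
    calc ‖(B ^ m) a b‖
        ≤ ‖f ((0:ℤ),(0:ℤ)) + f d‖ + ∑ q ∈ ((Bxx m).erase ((0:ℤ),(0:ℤ))).erase d, ‖f q‖ := by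
          rw [hBentry m a b, ← Finset.add_sum_erase _ f h00m, ← Finset.add_sum_erase _ f hd0',
            ← add_assoc]
          exact le_trans (norm_add_le _ _) (by gcongr; exact norm_sum_le _ _)
      _ < (‖f ((0:ℤ),(0:ℤ))‖ + ‖f d‖) + ∑ q ∈ ((Bxx m).erase ((0:ℤ),(0:ℤ))).erase d, ‖f q‖ := by
          exact add_lt_add_of_lt_of_le hkey le_rfl
      _ = ∑ q ∈ Bxx m, ‖f q‖ := by
          rw [add_assoc, Finset.add_sum_erase _ (fun q => ‖f q‖) hd0',
            Finset.add_sum_erase _ (fun q => ‖f q‖) h00m]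
      _ = Sm A az aw m a b := by
          rw [hSm_entry]
          exact Finset.sum_congr rfl fun q _ => hfg m a b q
  -- positivity of the positive entries
  have hSmm_pos : ∀ a b : Fin s₀, 0 < Sm A az aw m a b := by
    intro a b
    have hq₀ : 0 < Qr A m 0 0 a b := ENNReal.toReal_pos (hQpos a b).1.ne' (Qe_ne_top hA)
    have h1' : (0:ℝ) < az ^ ((0:ℤ),(0:ℤ)).1 * aw ^ ((0:ℤ),(0:ℤ)).2 * Qr A m 0 0 a b := by
      simpa using hq₀
    exact lt_of_lt_of_le h1' (Sm_single_le haz haw h00m a b)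
  -- the contraction factor c
  haveI : Nonempty (Fin s₀ × Fin s₀) := inferInstance
  set c : ℝ := Finset.univ.sup' Finset.univ_nonempty
      (fun p : Fin s₀ × Fin s₀ => ‖(B ^ m) p.1 p.2‖ / Sm A az aw m p.1 p.2) with hc
  have hc1 : c < 1 := by
    rw [hc, Finset.sup'_lt_iff]
    intro p _
    exact (div_lt_one (hSmm_pos p.1 p.2)).mpr (hstrict p.1 p.2)
  have hcb : ∀ a b : Fin s₀, ‖(B ^ m) a b‖ ≤ c * Sm A az aw m a b := by
    intro a b
    have hle := Finset.le_sup'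
      (fun p : Fin s₀ × Fin s₀ => ‖(B ^ m) p.1 p.2‖ / Sm A az aw m p.1 p.2)
      (Finset.mem_univ (a, b))
    rw [← hc] at hle
    have hSm := hSmm_pos a b
    calc ‖(B ^ m) a b‖ = (‖(B ^ m) a b‖ / Sm A az aw m a b) * Sm A az aw m a b := by
          rw [div_mul_cancel₀ _ hSm.ne']
      _ ≤ c * Sm A az aw m a b := mul_le_mul_of_nonneg_right hle hSm.le
  have hc0 : 0 ≤ c := by
    have hle := Finset.le_sup'
      (fun p : Fin s₀ × Fin s₀ => ‖(B ^ m) p.1 p.2‖ / Sm A az aw m p.1 p.2)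
      (Finset.mem_univ (a₀, a₀))
    rw [← hc] at hle
    exact le_trans (div_nonneg (norm_nonneg _) (hSmm_pos a₀ a₀).le) hle
  -- the iterated bound
  have hiter : ∀ (k : ℕ) (a b : Fin s₀),
      ‖(B ^ (m * (k+1))) a b‖ ≤ c ^ (k+1) * Sm A az aw (m * (k+1)) a b := by
    intro k
    induction k with
    | zero => intro a b; simpa using hcb a b
    | succ k ih =>
      intro a b
      have hsplit : m * (k + 1 + 1) = m + m * (k + 1) := by ring
      calc ‖(B ^ (m * (k+1+1))) a b‖
          = ‖∑ e, (B ^ m) a e * (B ^ (m*(k+1))) e b‖ := by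
            rw [hsplit, pow_add, Matrix.mul_apply]
        _ ≤ ∑ e, ‖(B ^ m) a e‖ * ‖(B ^ (m*(k+1))) e b‖ := by
            refine le_trans (norm_sum_le _ _) (Finset.sum_le_sum fun e _ => ?_)
            rw [norm_mul]
        _ ≤ ∑ e, (c * Sm A az aw m a e) * (c ^ (k+1) * Sm A az aw (m*(k+1)) e b) := by
            refine Finset.sum_le_sum fun e _ => ?_
            exact mul_le_mul (hcb a e) (ih e b) (norm_nonneg _)
              (mul_nonneg hc0 (Sm_nonneg haz haw))
        _ = c ^ (k+1+1) * ∑ e, Sm A az aw m a e * Sm A az aw (m*(k+1)) e b := by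
            rw [Finset.mul_sum]
            exact Finset.sum_congr rfl fun e _ => by ring
        _ = c ^ (k+1+1) * Sm A az aw (m * (k+1+1)) a b := by
            rw [hsplit, Sm_mul hA haz haw, Matrix.mul_apply]
  -- set up the operator norm
  letI : NormedRing (Matrix (Fin s₀) (Fin s₀) ℂ) := Matrix.linftyOpNormedRing
  letI : NormedAlgebra ℂ (Matrix (Fin s₀) (Fin s₀) ℂ) := Matrix.linftyOpNormedAlgebra
  haveI : CompleteSpace (Matrix (Fin s₀) (Fin s₀) ℂ) := FiniteDimensional.complete ℂ _
  haveI : Nontrivial (Matrix (Fin s₀) (Fin s₀) ℂ) := ⟨⟨0, 1, fun hcon => by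
    have hcon' := congrFun (congrFun hcon a₀) a₀
    simp [Matrix.one_apply] at hcon'⟩⟩
  have hnn : ∀ M N : Matrix (Fin s₀) (Fin s₀) ℂ,
      (∀ a b, ‖M a b‖ ≤ ‖N a b‖) → ‖M‖₊ ≤ ‖N‖₊ := by
    intro M N hMN
    rw [Matrix.linfty_opNNNorm_def, Matrix.linfty_opNNNorm_def]
    refine Finset.sup_mono_fun fun a _ => Finset.sum_le_sum fun b _ => ?_
    exact_mod_cast hMN a b
  have hentry_le : ∀ M : Matrix (Fin s₀) (Fin s₀) ℂ, ∀ a b, ‖M a b‖₊ ≤ ‖M‖₊ := by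
    intro M a b
    rw [Matrix.linfty_opNNNorm_def]
    exact le_trans (Finset.single_le_sum (f := fun b => ‖M a b‖₊) (fun _ _ => zero_le)
      (Finset.mem_univ b)) (Finset.le_sup (f := fun i => ∑ j, ‖M i j‖₊) (Finset.mem_univ a))
  have hnB : ∀ k : ℕ, (‖B ^ (m * (k+1))‖₊ : ℝ≥0∞)
      ≤ ENNReal.ofReal (c ^ (k+1)) * (‖As ^ (m * (k+1))‖₊ : ℝ≥0∞) := by
    intro k
    have hcpow : (0:ℝ) ≤ c ^ (k+1) := pow_nonneg hc0 _
    have hsm : ∀ a b, ‖(B ^ (m*(k+1))) a b‖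
        ≤ ‖((((c ^ (k+1) : ℝ)) : ℂ) • As ^ (m*(k+1))) a b‖ := by
      intro a b
      have hAs_ab : (As ^ (m*(k+1))) a b = ((Sm A az aw (m*(k+1)) a b : ℝ) : ℂ) := by
        rw [hAspow]; simp [Matrix.map_apply]
      have hrhs : ‖((((c ^ (k+1) : ℝ)) : ℂ) • As ^ (m*(k+1))) a b‖
          = c ^ (k+1) * Sm A az aw (m*(k+1)) a b := by
        rw [Matrix.smul_apply, hAs_ab, smul_eq_mul, norm_mul]
        rw [Complex.norm_real, Complex.norm_real, Real.norm_eq_abs, Real.norm_eq_abs,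
          abs_of_nonneg hcpow, abs_of_nonneg (Sm_nonneg haz haw)]
      rw [hrhs]
      exact hiter k a b
    calc (‖B ^ (m*(k+1))‖₊ : ℝ≥0∞)
        ≤ (‖(((c ^ (k+1) : ℝ)) : ℂ) • As ^ (m*(k+1))‖₊ : ℝ≥0∞) := by
          exact_mod_cast hnn _ _ hsm
      _ = (‖(((c ^ (k+1) : ℝ)) : ℂ)‖₊ : ℝ≥0∞) * (‖As ^ (m*(k+1))‖₊ : ℝ≥0∞) := by
          rw [nnnorm_smul]
          push_cast
          ring
      _ = ENNReal.ofReal (c ^ (k+1)) * (‖As ^ (m*(k+1))‖₊ : ℝ≥0∞) := by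
          congr 1
          rw [← enorm_eq_nnnorm, ← ofReal_norm, Complex.norm_real, Real.norm_eq_abs,
            abs_of_nonneg hcpow]
  -- Gelfand's formula for As
  set ρ : ℝ≥0∞ := spectralRadius ℂ As with hρdef
  have hGel : Filter.Tendsto (fun n : ℕ => (‖As ^ n‖₊ : ℝ≥0∞) ^ (1 / n : ℝ))
      Filter.atTop (nhds ρ) :=
    spectrum.pow_nnnorm_pow_one_div_tendsto_nhds_spectralRadius As
  have hφ : Filter.Tendsto (fun k : ℕ => m * (k+1)) Filter.atTop Filter.atTop := by
    refine StrictMono.tendsto_atTop fun a b hab => ?_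
    exact mul_lt_mul_of_pos_left (by omega) hm0
  have hGel' : Filter.Tendsto
      (fun k : ℕ => (‖As ^ (m*(k+1))‖₊ : ℝ≥0∞) ^ (1 / ((m*(k+1) : ℕ) : ℝ)))
      Filter.atTop (nhds ρ) := hGel.comp hφ
  -- lower bound on ρ
  have hδpos : 0 < Sm A az aw m a₀ a₀ := hSmm_pos a₀ a₀
  have hδk : ∀ k : ℕ, Sm A az aw m a₀ a₀ ^ (k+1) ≤ Sm A az aw (m*(k+1)) a₀ a₀ := by
    intro k
    induction k with
    | zero => simp
    | succ k ih =>
      have hsplit : m * (k+1+1) = m + m * (k+1) := by ring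
      rw [hsplit, Sm_mul hA haz haw, Matrix.mul_apply]
      calc Sm A az aw m a₀ a₀ ^ (k+1+1)
          = Sm A az aw m a₀ a₀ * Sm A az aw m a₀ a₀ ^ (k+1) := by ring
        _ ≤ Sm A az aw m a₀ a₀ * Sm A az aw (m*(k+1)) a₀ a₀ :=
            mul_le_mul_of_nonneg_left ih (Sm_nonneg haz haw)
        _ ≤ ∑ e, Sm A az aw m a₀ e * Sm A az aw (m*(k+1)) e a₀ :=
            Finset.single_le_sum
              (f := fun e => Sm A az aw m a₀ e * Sm A az aw (m*(k+1)) e a₀)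
              (fun e _ => mul_nonneg (Sm_nonneg haz haw) (Sm_nonneg haz haw))
              (Finset.mem_univ a₀)
  have hAs_lb : ∀ k : ℕ, ENNReal.ofReal (Sm A az aw m a₀ a₀ ^ (k+1))
      ≤ (‖As ^ (m*(k+1))‖₊ : ℝ≥0∞) := by
    intro k
    have hAs_ab : (As ^ (m*(k+1))) a₀ a₀ = ((Sm A az aw (m*(k+1)) a₀ a₀ : ℝ) : ℂ) := by
      rw [hAspow]; simp [Matrix.map_apply]
    calc ENNReal.ofReal (Sm A az aw m a₀ a₀ ^ (k+1))
        ≤ ENNReal.ofReal ‖(As ^ (m*(k+1))) a₀ a₀‖ := by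
          refine ENNReal.ofReal_le_ofReal ?_
          rw [hAs_ab, Complex.norm_real, Real.norm_eq_abs,
            abs_of_nonneg (Sm_nonneg haz haw)]
          exact hδk k
      _ = (‖(As ^ (m*(k+1))) a₀ a₀‖₊ : ℝ≥0∞) := ofReal_norm _
      _ ≤ (‖As ^ (m*(k+1))‖₊ : ℝ≥0∞) := by exact_mod_cast hentry_le _ a₀ a₀
  have hρ_lb : (ENNReal.ofReal (Sm A az aw m a₀ a₀)) ^ (1/(m:ℝ)) ≤ ρ := by
    refine ge_of_tendsto hGel' (Filter.Eventually.of_forall fun k => ?_)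
    rw [← rpow_aux _ hδpos.le hm0 k]
    exact ENNReal.rpow_le_rpow (hAs_lb k) (by positivity)
  have hρ0 : 0 < ρ := lt_of_lt_of_le
    (ENNReal.rpow_pos (ENNReal.ofReal_pos.mpr hδpos) ENNReal.ofReal_ne_top) hρ_lb
  have hρtop : ρ ≠ ⊤ :=
    ne_top_of_le_ne_top ENNReal.coe_ne_top (spectrum.spectralRadius_le_nnnorm (𝕜 := ℂ) As)
  -- upper bound on the spectral radius of B
  set cE : ℝ≥0∞ := (ENNReal.ofReal c) ^ (1/(m:ℝ)) with hcE
  have hcEtop : cE ≠ ⊤ :=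
    ENNReal.rpow_ne_top_of_nonneg (by positivity) ENNReal.ofReal_ne_top
  have hub : ∀ k : ℕ, spectralRadius ℂ B
      ≤ cE * (‖As ^ (m*(k+1))‖₊ : ℝ≥0∞) ^ (1 / ((m*(k+1) : ℕ) : ℝ)) := by
    intro k
    have hφpos : 0 < m * (k+1) := Nat.mul_pos hm0 (Nat.succ_pos k)
    have hn1 : m * (k+1) - 1 + 1 = m * (k+1) := by omega
    have h0 := spectrum.spectralRadius_le_pow_nnnorm_pow_one_div ℂ B (m*(k+1) - 1)
    rw [hn1] at h0
    have hcast : ((m*(k+1) - 1 : ℕ) : ℝ) + 1 = ((m*(k+1) : ℕ) : ℝ) := by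
      exact_mod_cast congrArg (Nat.cast (R := ℝ)) hn1
    rw [hcast] at h0
    rw [nnnorm_one, ENNReal.coe_one, ENNReal.one_rpow, mul_one] at h0
    calc spectralRadius ℂ B
        ≤ (‖B ^ (m*(k+1))‖₊ : ℝ≥0∞) ^ (1 / ((m*(k+1) : ℕ) : ℝ)) := h0
      _ ≤ (ENNReal.ofReal (c^(k+1)) * (‖As ^ (m*(k+1))‖₊ : ℝ≥0∞))
            ^ (1 / ((m*(k+1) : ℕ) : ℝ)) :=
          ENNReal.rpow_le_rpow (hnB k) (by positivity)
      _ = cE * (‖As ^ (m*(k+1))‖₊ : ℝ≥0∞) ^ (1 / ((m*(k+1) : ℕ) : ℝ)) := by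
          rw [ENNReal.mul_rpow_of_nonneg _ _ (by positivity), rpow_aux c hc0 hm0 k]
  have hlim : Filter.Tendsto
      (fun k : ℕ => cE * (‖As ^ (m*(k+1))‖₊ : ℝ≥0∞) ^ (1 / ((m*(k+1) : ℕ) : ℝ)))
      Filter.atTop (nhds (cE * ρ)) := ENNReal.Tendsto.const_mul hGel' (Or.inr hcEtop)
  have hsrB : spectralRadius ℂ B ≤ cE * ρ :=
    ge_of_tendsto hlim (Filter.Eventually.of_forall hub)
  have hm0' : (0:ℝ) < 1 / (m:ℝ) := by positivity
  have hcE1 : cE < 1 := ENNReal.rpow_lt_one (ENNReal.ofReal_lt_one.mpr hc1) hm0'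
  have hmulQ : cE * ρ < ρ := by
    calc cE * ρ < 1 * ρ := ENNReal.mul_lt_mul_left hρ0.ne' hρtop hcE1
      _ = ρ := one_mul ρ
  -- translate back to sprC
  have hbddAs : BddAbove ((fun z : ℂ => ‖z‖) '' spectrum ℂ As) := by
    refine ⟨‖As‖, ?_⟩
    rintro x ⟨μ, hμ, rfl⟩
    exact spectrum.norm_le_norm_of_mem hμ
  have hneB : ((fun z : ℂ => ‖z‖) '' spectrum ℂ B).Nonempty := (spectrum.nonempty B).image _
  have hAs_ub : ρ ≤ ENNReal.ofReal (sprC As) := by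
    rw [hρdef]
    unfold spectralRadius
    refine iSup₂_le fun μ hμ => ?_
    have h1' : ‖μ‖ ≤ sprC As := le_csSup hbddAs ⟨μ, hμ, rfl⟩
    calc (‖μ‖₊ : ℝ≥0∞) = ENNReal.ofReal ‖μ‖ := by
          rw [← enorm_eq_nnnorm, ← ofReal_norm]
      _ ≤ _ := ENNReal.ofReal_le_ofReal h1'
  have hsprAs_pos : 0 < sprC As := by
    by_contra hcon
    push_neg at hcon
    have hzero : ρ = 0 := le_antisymm (le_trans hAs_ub
      (le_of_eq (ENNReal.ofReal_eq_zero.mpr hcon))) zero_le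
    exact hρ0.ne' hzero
  have hfinal : ∀ x ∈ (fun z : ℂ => ‖z‖) '' spectrum ℂ B, x ≤ (cE * ρ).toReal := by
    rintro x ⟨μ, hμ, rfl⟩
    have h2 : (‖μ‖₊ : ℝ≥0∞) ≤ spectralRadius ℂ B := by
      unfold spectralRadius
      exact le_iSup₂ (f := fun k (_ : k ∈ spectrum ℂ B) => (‖k‖₊ : ℝ≥0∞)) μ hμ
    have h3 : (‖μ‖₊ : ℝ≥0∞) ≤ cE * ρ := le_trans h2 hsrB
    have h4 := ENNReal.toReal_mono (ENNReal.mul_ne_top hcEtop hρtop) h3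
    rw [ENNReal.coe_toReal, coe_nnnorm] at h4
    exact h4
  have hlt2 : (cE * ρ).toReal < sprC As := by
    have h5 : cE * ρ < ENNReal.ofReal (sprC As) := lt_of_lt_of_le hmulQ hAs_ub
    calc (cE * ρ).toReal < (ENNReal.ofReal (sprC As)).toReal := by
          exact (ENNReal.toReal_lt_toReal (ENNReal.mul_ne_top hcEtop hρtop)
            ENNReal.ofReal_ne_top).mpr h5
      _ = sprC As := ENNReal.toReal_ofReal hsprAs_pos.le
  show sprC B < sprC As
  exact lt_of_le_of_lt (csSup_le hneB hfinal) hlt2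

end MMRW2d
end

section
/- Under Assumptions 1 and 3, for any vector c=(c₁,c₂) of positive integers and for all θ₁,θ₂∈ℝ, cp(A_{*,*}(θ₁,θ₂)) = cp(ᶜA_{*,*}(c₁θ₁, c₂θ₂)). -/
open scoped ENNReal

namespace MMRW2d

variable {s₀ : ℕ}

/-! ## Auxiliary machinery for the proof -/

open Finset in
private lemma onedim {c : ℕ} (hc : 0 < c) (m : Fin c) (g : ℤ → ℝ)
    (hg : ∀ k : ℤ, k ∉ Finset.Icc (-1 : ℤ) 1 → g k = 0) :
    ∑ m' : Fin c, ∑ i ∈ Finset.Icc (-1 : ℤ) 1,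
      g ((c : ℤ) * i + (((m' : ℕ) : ℤ) - ((m : ℕ) : ℤ))) =
    ∑ k ∈ Finset.Icc (-1 : ℤ) 1, g k := by
  classical
  set e : Fin c × ℤ → ℤ := fun p => (c : ℤ) * p.2 + (((p.1 : ℕ) : ℤ) - ((m : ℕ) : ℤ)) with he
  set T : Finset (Fin c × ℤ) := Finset.univ ×ˢ Finset.Icc (-1 : ℤ) 1 with hT
  have h1 : ∑ m' : Fin c, ∑ i ∈ Finset.Icc (-1 : ℤ) 1,
      g ((c : ℤ) * i + (((m' : ℕ) : ℤ) - ((m : ℕ) : ℤ))) = ∑ p ∈ T, g (e p) := by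
    rw [hT, Finset.sum_product]
  have hinj : ∀ p ∈ T, ∀ q ∈ T, e p = e q → p = q := by
    rintro ⟨m1, i1⟩ hp ⟨m2, i2⟩ hq hpq
    simp only [hT, Finset.mem_product, Finset.mem_Icc, Finset.mem_univ, true_and] at hp hq
    simp only [he] at hpq
    have h1 : (m1 : ℕ) < c := m1.2
    have h2 : (m2 : ℕ) < c := m2.2
    obtain ⟨hi1, hi1'⟩ := hp
    obtain ⟨hi2, hi2'⟩ := hq
    have : i1 = i2 ∧ (m1 : ℕ) = (m2 : ℕ) := by
      interval_cases i1 <;> interval_cases i2 <;> omega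
    exact Prod.ext (Fin.ext this.2) this.1
  have h2 : ∑ p ∈ T, g (e p) = ∑ k ∈ T.image e, g k := (Finset.sum_image hinj).symm
  have hsub : Finset.Icc (-1 : ℤ) 1 ⊆ T.image e := by
    intro k hk
    simp only [Finset.mem_Icc] at hk
    have hm : (m : ℕ) < c := m.2
    simp only [Finset.mem_image, hT, Finset.mem_product, Finset.mem_univ, true_and,
      Finset.mem_Icc, he]
    by_cases h0 : ((m : ℕ) : ℤ) + k < 0
    · exact ⟨(⟨c - 1, by omega⟩, -1), by constructor <;> omega, by simp; omega⟩
    · by_cases h1 : ((m : ℕ) : ℤ) + k ≥ (c : ℤ)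
      · exact ⟨(⟨0, hc⟩, 1), by constructor <;> omega, by simp; omega⟩
      · exact ⟨(⟨(((m : ℕ) : ℤ) + k).toNat, by omega⟩, 0), by constructor <;> omega,
          by simp; omega⟩
  rw [h1, h2]
  exact (Finset.sum_subset hsub (fun x _ hx => hg x hx)).symm

/-- Real version of the intermediate kernel `Q`. -/
noncomputable def qr {s₀ : ℕ} (A : ℤ → ℤ → Matrix (Fin s₀) (Fin s₀) ℝ) (c₁ c₂ : ℕ)
    (θ₁ θ₂ : ℝ) (y y' : Fin c₁ × Fin c₂ × Fin s₀) : ℝ :=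
  ∑ i ∈ Finset.Icc (-1 : ℤ) 1, ∑ j ∈ Finset.Icc (-1 : ℤ) 1,
    Real.exp ((((c₁ : ℤ) * i + (((y'.1 : ℕ) : ℤ) - ((y.1 : ℕ) : ℤ)) : ℤ) : ℝ) * θ₁ +
              (((c₂ : ℤ) * j + (((y'.2.1 : ℕ) : ℤ) - ((y.2.1 : ℕ) : ℤ)) : ℤ) : ℝ) * θ₂) *
      A ((c₁ : ℤ) * i + (((y'.1 : ℕ) : ℤ) - ((y.1 : ℕ) : ℤ)))
        ((c₂ : ℤ) * j + (((y'.2.1 : ℕ) : ℤ) - ((y.2.1 : ℕ) : ℤ))) y.2.2 y'.2.2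

/-- The intermediate kernel `Q` in `ℝ≥0∞`. -/
noncomputable def Qk {s₀ : ℕ} (A : ℤ → ℤ → Matrix (Fin s₀) (Fin s₀) ℝ) (c₁ c₂ : ℕ)
    (θ₁ θ₂ : ℝ) (y y' : Fin c₁ × Fin c₂ × Fin s₀) : ℝ≥0∞ :=
  ENNReal.ofReal (qr A c₁ c₂ θ₁ θ₂ y y')

/-- The diagonal exponent. -/
noncomputable def uex (θ₁ θ₂ : ℝ) {c₁ c₂ s₀ : ℕ} (y : Fin c₁ × Fin c₂ × Fin s₀) : ℝ :=
  ((y.1 : ℕ) : ℝ) * θ₁ + ((y.2.1 : ℕ) : ℝ) * θ₂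

noncomputable def wgt (θ₁ θ₂ : ℝ) {c₁ c₂ s₀ : ℕ} (y : Fin c₁ × Fin c₂ × Fin s₀) : ℝ≥0∞ :=
  ENNReal.ofReal (Real.exp (uex θ₁ θ₂ y))

noncomputable def vgt (θ₁ θ₂ : ℝ) {c₁ c₂ s₀ : ℕ} (y : Fin c₁ × Fin c₂ × Fin s₀) : ℝ≥0∞ :=
  ENNReal.ofReal (Real.exp (-(uex θ₁ θ₂ y)))

lemma wv {θ₁ θ₂ : ℝ} {c₁ c₂ s₀ : ℕ} (y : Fin c₁ × Fin c₂ × Fin s₀) :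
    wgt θ₁ θ₂ y * vgt θ₁ θ₂ y = 1 := by
  rw [wgt, vgt, ← ENNReal.ofReal_mul (Real.exp_nonneg _), ← Real.exp_add, add_neg_cancel,
    Real.exp_zero, ENNReal.ofReal_one]

lemma vw {θ₁ θ₂ : ℝ} {c₁ c₂ s₀ : ℕ} (y : Fin c₁ × Fin c₂ × Fin s₀) :
    vgt θ₁ θ₂ y * wgt θ₁ θ₂ y = 1 := by rw [mul_comm]; exact wv y

lemma wgt_ne_top {θ₁ θ₂ : ℝ} {c₁ c₂ s₀ : ℕ} (y : Fin c₁ × Fin c₂ × Fin s₀) :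
    wgt θ₁ θ₂ y ≠ ⊤ := ENNReal.ofReal_ne_top

lemma vgt_ne_top {θ₁ θ₂ : ℝ} {c₁ c₂ s₀ : ℕ} (y : Fin c₁ × Fin c₂ × Fin s₀) :
    vgt θ₁ θ₂ y ≠ ⊤ := ENNReal.ofReal_ne_top

lemma qr_nonneg {s₀ : ℕ} {A : ℤ → ℤ → Matrix (Fin s₀) (Fin s₀) ℝ} (hA : IsMMRW A)
    (c₁ c₂ : ℕ) (θ₁ θ₂ : ℝ) (y y' : Fin c₁ × Fin c₂ × Fin s₀) :
    0 ≤ qr A c₁ c₂ θ₁ θ₂ y y' :=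
  Finset.sum_nonneg fun _ _ => Finset.sum_nonneg fun _ _ =>
    mul_nonneg (Real.exp_nonneg _) (hA.nonneg _ _ _ _)

private lemma exp_split {x u v E a : ℝ} (h : x = u + v + E) :
    Real.exp x * a = Real.exp u * (Real.exp v * (Real.exp E * a)) := by
  subst h
  rw [Real.exp_add, Real.exp_add]
  ring

/-- `N = W Q W⁻¹`. -/
lemma cAss_eq_wQv {s₀ : ℕ} {A : ℤ → ℤ → Matrix (Fin s₀) (Fin s₀) ℝ}
    (c₁ c₂ : ℕ) (θ₁ θ₂ : ℝ) (y y' : Fin c₁ × Fin c₂ × Fin s₀) :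
    ENNReal.ofReal (cAss A c₁ c₂ ((c₁ : ℝ) * θ₁) ((c₂ : ℝ) * θ₂) y y') =
      wgt θ₁ θ₂ y * vgt θ₁ θ₂ y' * Qk A c₁ c₂ θ₁ θ₂ y y' := by
  have hre : cAss A c₁ c₂ ((c₁ : ℝ) * θ₁) ((c₂ : ℝ) * θ₂) y y' =
      Real.exp (uex θ₁ θ₂ y) * (Real.exp (-(uex θ₁ θ₂ y')) * qr A c₁ c₂ θ₁ θ₂ y y') := by
    simp only [cAss, cA, qr, Matrix.sum_apply, Matrix.smul_apply, Matrix.of_apply,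
      smul_eq_mul, Finset.mul_sum]
    refine Finset.sum_congr rfl fun i _ => Finset.sum_congr rfl fun j _ => ?_
    exact exp_split (by unfold uex; push_cast; ring)
  rw [hre, ENNReal.ofReal_mul (Real.exp_nonneg _), ENNReal.ofReal_mul (Real.exp_nonneg _),
    ← mul_assoc]
  rfl

/-- Entry formula for `Ass`. -/
lemma Ass_apply {s₀ : ℕ} (A : ℤ → ℤ → Matrix (Fin s₀) (Fin s₀) ℝ) (θ₁ θ₂ : ℝ)
    (a b : Fin s₀) :
    Ass A θ₁ θ₂ a b = ∑ k ∈ Finset.Icc (-1 : ℤ) 1, ∑ l ∈ Finset.Icc (-1 : ℤ) 1,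
      Real.exp ((k : ℝ) * θ₁ + (l : ℝ) * θ₂) * A k l a b := by
  simp [Ass, Matrix.sum_apply]

/-- Column sums of `Q` over the mod classes recover `M = A_{*,*}(θ₁,θ₂)`. -/
lemma sum_qr {s₀ : ℕ} {A : ℤ → ℤ → Matrix (Fin s₀) (Fin s₀) ℝ} (hA : IsMMRW A)
    {c₁ c₂ : ℕ} (hc₁ : 0 < c₁) (hc₂ : 0 < c₂) (θ₁ θ₂ : ℝ)
    (y : Fin c₁ × Fin c₂ × Fin s₀) (b : Fin s₀) :
    ∑ m₁' : Fin c₁, ∑ m₂' : Fin c₂, qr A c₁ c₂ θ₁ θ₂ y (m₁', m₂', b) =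
      Ass A θ₁ θ₂ y.2.2 b := by
  have hvan : ∀ k l : ℤ, k ∉ Finset.Icc (-1 : ℤ) 1 ∨ l ∉ Finset.Icc (-1 : ℤ) 1 →
      Real.exp ((k : ℝ) * θ₁ + (l : ℝ) * θ₂) * A k l y.2.2 b = 0 := by
    intro k l h
    rw [hA.skipfree k l h]
    simp
  have step1 : ∀ m₁' : Fin c₁, ∀ i : ℤ,
      ∑ m₂' : Fin c₂, ∑ j ∈ Finset.Icc (-1 : ℤ) 1,
        Real.exp ((((c₁ : ℤ) * i + (((m₁' : ℕ) : ℤ) - ((y.1 : ℕ) : ℤ)) : ℤ) : ℝ) * θ₁ +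
          (((c₂ : ℤ) * j + (((m₂' : ℕ) : ℤ) - ((y.2.1 : ℕ) : ℤ)) : ℤ) : ℝ) * θ₂) *
          A ((c₁ : ℤ) * i + (((m₁' : ℕ) : ℤ) - ((y.1 : ℕ) : ℤ)))
            ((c₂ : ℤ) * j + (((m₂' : ℕ) : ℤ) - ((y.2.1 : ℕ) : ℤ))) y.2.2 b =
      ∑ l ∈ Finset.Icc (-1 : ℤ) 1,
        Real.exp ((((c₁ : ℤ) * i + (((m₁' : ℕ) : ℤ) - ((y.1 : ℕ) : ℤ)) : ℤ) : ℝ) * θ₁ +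
          (l : ℝ) * θ₂) *
          A ((c₁ : ℤ) * i + (((m₁' : ℕ) : ℤ) - ((y.1 : ℕ) : ℤ))) l y.2.2 b := by
    intro m₁' i
    exact onedim hc₂ y.2.1
      (fun l => Real.exp ((((c₁ : ℤ) * i + (((m₁' : ℕ) : ℤ) - ((y.1 : ℕ) : ℤ)) : ℤ) : ℝ) * θ₁ +
          (l : ℝ) * θ₂) *
          A ((c₁ : ℤ) * i + (((m₁' : ℕ) : ℤ) - ((y.1 : ℕ) : ℤ))) l y.2.2 b)
      (fun l hl => hvan _ l (Or.inr hl))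
  calc ∑ m₁' : Fin c₁, ∑ m₂' : Fin c₂, qr A c₁ c₂ θ₁ θ₂ y (m₁', m₂', b)
      = ∑ m₁' : Fin c₁, ∑ i ∈ Finset.Icc (-1 : ℤ) 1, ∑ m₂' : Fin c₂,
          ∑ j ∈ Finset.Icc (-1 : ℤ) 1,
          Real.exp ((((c₁ : ℤ) * i + (((m₁' : ℕ) : ℤ) - ((y.1 : ℕ) : ℤ)) : ℤ) : ℝ) * θ₁ +
            (((c₂ : ℤ) * j + (((m₂' : ℕ) : ℤ) - ((y.2.1 : ℕ) : ℤ)) : ℤ) : ℝ) * θ₂) *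
            A ((c₁ : ℤ) * i + (((m₁' : ℕ) : ℤ) - ((y.1 : ℕ) : ℤ)))
              ((c₂ : ℤ) * j + (((m₂' : ℕ) : ℤ) - ((y.2.1 : ℕ) : ℤ))) y.2.2 b := by
        refine Finset.sum_congr rfl fun m₁' _ => ?_
        rw [Finset.sum_comm]
        rfl
    _ = ∑ m₁' : Fin c₁, ∑ i ∈ Finset.Icc (-1 : ℤ) 1, ∑ l ∈ Finset.Icc (-1 : ℤ) 1,
          Real.exp ((((c₁ : ℤ) * i + (((m₁' : ℕ) : ℤ) - ((y.1 : ℕ) : ℤ)) : ℤ) : ℝ) * θ₁ +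
            (l : ℝ) * θ₂) *
            A ((c₁ : ℤ) * i + (((m₁' : ℕ) : ℤ) - ((y.1 : ℕ) : ℤ))) l y.2.2 b := by
        exact Finset.sum_congr rfl fun m₁' _ => Finset.sum_congr rfl fun i _ => step1 m₁' i
    _ = ∑ k ∈ Finset.Icc (-1 : ℤ) 1, ∑ l ∈ Finset.Icc (-1 : ℤ) 1,
          Real.exp ((k : ℝ) * θ₁ + (l : ℝ) * θ₂) * A k l y.2.2 b := by
        exact onedim hc₁ y.1
          (fun k => ∑ l ∈ Finset.Icc (-1 : ℤ) 1,
            Real.exp ((k : ℝ) * θ₁ + (l : ℝ) * θ₂) * A k l y.2.2 b)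
          (fun k hk => Finset.sum_eq_zero fun l _ => hvan k l (Or.inl hk))
    _ = Ass A θ₁ θ₂ y.2.2 b := (Ass_apply A θ₁ θ₂ y.2.2 b).symm


lemma kmul_fintype {α : Type*} [Fintype α] (p q : α → α → ℝ≥0∞) (i j : α) :
    kmul p q i j = ∑ k, p i k * q k j := tsum_fintype _

lemma sum_Qk {s₀ : ℕ} {A : ℤ → ℤ → Matrix (Fin s₀) (Fin s₀) ℝ} (hA : IsMMRW A)
    {c₁ c₂ : ℕ} (hc₁ : 0 < c₁) (hc₂ : 0 < c₂) (θ₁ θ₂ : ℝ)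
    (y : Fin c₁ × Fin c₂ × Fin s₀) (b : Fin s₀) :
    ∑ m₁' : Fin c₁, ∑ m₂' : Fin c₂, Qk A c₁ c₂ θ₁ θ₂ y (m₁', m₂', b)
      = ENNReal.ofReal (Ass A θ₁ θ₂ y.2.2 b) := by
  simp only [Qk]
  rw [← sum_qr hA hc₁ hc₂ θ₁ θ₂ y b,
    ENNReal.ofReal_sum_of_nonneg (fun _ _ => Finset.sum_nonneg fun _ _ => qr_nonneg hA _ _ _ _ _ _)]
  refine Finset.sum_congr rfl fun m₁' _ => ?_
  rw [ENNReal.ofReal_sum_of_nonneg (fun _ _ => qr_nonneg hA _ _ _ _ _ _)]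

lemma kpow_cAss {s₀ : ℕ} (A : ℤ → ℤ → Matrix (Fin s₀) (Fin s₀) ℝ) (c₁ c₂ : ℕ) (θ₁ θ₂ : ℝ)
    (n : ℕ) (y y' : Fin c₁ × Fin c₂ × Fin s₀) :
    kpow (fun a b => ENNReal.ofReal (cAss A c₁ c₂ ((c₁ : ℝ) * θ₁) ((c₂ : ℝ) * θ₂) a b)) n y y' =
      wgt θ₁ θ₂ y * vgt θ₁ θ₂ y' * kpow (Qk A c₁ c₂ θ₁ θ₂) n y y' := by
  induction n generalizing y with
  | zero =>
    by_cases h : y = y'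
    · subst h
      simp [kpow, wv y]
    · simp [kpow, h]
  | succ n ih =>
    show kmul _ _ y y' = _ * _ * kmul _ _ y y'
    rw [kmul_fintype, kmul_fintype, Finset.mul_sum]
    refine Finset.sum_congr rfl fun z _ => ?_
    rw [cAss_eq_wQv c₁ c₂ θ₁ θ₂ y z, ih z]
    calc (wgt θ₁ θ₂ y * vgt θ₁ θ₂ z * Qk A c₁ c₂ θ₁ θ₂ y z) *
          (wgt θ₁ θ₂ z * vgt θ₁ θ₂ y' * kpow (Qk A c₁ c₂ θ₁ θ₂) n z y')
        = wgt θ₁ θ₂ y * vgt θ₁ θ₂ y' *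
            ((vgt θ₁ θ₂ z * wgt θ₁ θ₂ z) *
              (Qk A c₁ c₂ θ₁ θ₂ y z * kpow (Qk A c₁ c₂ θ₁ θ₂) n z y')) := by ring
      _ = wgt θ₁ θ₂ y * vgt θ₁ θ₂ y' *
            (Qk A c₁ c₂ θ₁ θ₂ y z * kpow (Qk A c₁ c₂ θ₁ θ₂) n z y') := by rw [vw z, one_mul]

lemma kpow_Qk_sum {s₀ : ℕ} {A : ℤ → ℤ → Matrix (Fin s₀) (Fin s₀) ℝ} (hA : IsMMRW A)
    {c₁ c₂ : ℕ} (hc₁ : 0 < c₁) (hc₂ : 0 < c₂) (θ₁ θ₂ : ℝ) (n : ℕ)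
    (y : Fin c₁ × Fin c₂ × Fin s₀) (b : Fin s₀) :
    ∑ m₁' : Fin c₁, ∑ m₂' : Fin c₂, kpow (Qk A c₁ c₂ θ₁ θ₂) n y (m₁', m₂', b)
      = kpow (fun a b => ENNReal.ofReal (Ass A θ₁ θ₂ a b)) n y.2.2 b := by
  induction n generalizing y with
  | zero =>
    show (∑ m₁' : Fin c₁, ∑ m₂' : Fin c₂,
        if y = (m₁', m₂', b) then (1 : ℝ≥0∞) else 0) = if y.2.2 = b then 1 else 0
    simp [Prod.ext_iff, ite_and]
  | succ n ih =>
    show (∑ m₁' : Fin c₁, ∑ m₂' : Fin c₂,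
        kmul (Qk A c₁ c₂ θ₁ θ₂) (kpow (Qk A c₁ c₂ θ₁ θ₂) n) y (m₁', m₂', b)) =
      kmul (fun a b => ENNReal.ofReal (Ass A θ₁ θ₂ a b))
        (kpow (fun a b => ENNReal.ofReal (Ass A θ₁ θ₂ a b)) n) y.2.2 b
    simp only [kmul_fintype]
    calc ∑ m₁' : Fin c₁, ∑ m₂' : Fin c₂, ∑ z : Fin c₁ × Fin c₂ × Fin s₀,
          Qk A c₁ c₂ θ₁ θ₂ y z * kpow (Qk A c₁ c₂ θ₁ θ₂) n z (m₁', m₂', b)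
        = ∑ z : Fin c₁ × Fin c₂ × Fin s₀, ∑ m₁' : Fin c₁, ∑ m₂' : Fin c₂,
          Qk A c₁ c₂ θ₁ θ₂ y z * kpow (Qk A c₁ c₂ θ₁ θ₂) n z (m₁', m₂', b) := by
          exact (Finset.sum_congr rfl fun m₁' _ => Finset.sum_comm).trans Finset.sum_comm
      _ = ∑ z : Fin c₁ × Fin c₂ × Fin s₀, Qk A c₁ c₂ θ₁ θ₂ y z *
            kpow (fun a b => ENNReal.ofReal (Ass A θ₁ θ₂ a b)) n z.2.2 b := by
          refine Finset.sum_congr rfl fun z _ => ?_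
          rw [← ih z]
          simp only [Finset.mul_sum]
      _ = ∑ z₁ : Fin c₁, ∑ z₂ : Fin c₂, ∑ a' : Fin s₀, Qk A c₁ c₂ θ₁ θ₂ y (z₁, z₂, a') *
            kpow (fun a b => ENNReal.ofReal (Ass A θ₁ θ₂ a b)) n a' b := by
          rw [Fintype.sum_prod_type]
          refine Finset.sum_congr rfl fun z₁ _ => ?_
          rw [Fintype.sum_prod_type]
      _ = ∑ a' : Fin s₀, ∑ z₁ : Fin c₁, ∑ z₂ : Fin c₂, Qk A c₁ c₂ θ₁ θ₂ y (z₁, z₂, a') *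
            kpow (fun a b => ENNReal.ofReal (Ass A θ₁ θ₂ a b)) n a' b := by
          exact (Finset.sum_congr rfl fun z₁ _ => Finset.sum_comm).trans Finset.sum_comm
      _ = ∑ a' : Fin s₀, (∑ z₁ : Fin c₁, ∑ z₂ : Fin c₂, Qk A c₁ c₂ θ₁ θ₂ y (z₁, z₂, a')) *
            kpow (fun a b => ENNReal.ofReal (Ass A θ₁ θ₂ a b)) n a' b := by
          refine Finset.sum_congr rfl fun a' _ => ?_
          simp only [Finset.sum_mul]
      _ = ∑ a' : Fin s₀, ENNReal.ofReal (Ass A θ₁ θ₂ y.2.2 a') *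
            kpow (fun a b => ENNReal.ofReal (Ass A θ₁ θ₂ a b)) n a' b := by
          refine Finset.sum_congr rfl fun a' _ => ?_
          rw [sum_Qk hA hc₁ hc₂]

lemma kpow_Qk_le {s₀ : ℕ} {A : ℤ → ℤ → Matrix (Fin s₀) (Fin s₀) ℝ} (hA : IsMMRW A)
    {c₁ c₂ : ℕ} (hc₁ : 0 < c₁) (hc₂ : 0 < c₂) (θ₁ θ₂ : ℝ) (n : ℕ)
    (y : Fin c₁ × Fin c₂ × Fin s₀) (m₁' : Fin c₁) (m₂' : Fin c₂) (b : Fin s₀) :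
    kpow (Qk A c₁ c₂ θ₁ θ₂) n y (m₁', m₂', b) ≤
      kpow (fun a b => ENNReal.ofReal (Ass A θ₁ θ₂ a b)) n y.2.2 b := by
  rw [← kpow_Qk_sum hA hc₁ hc₂ θ₁ θ₂ n y b]
  calc kpow (Qk A c₁ c₂ θ₁ θ₂) n y (m₁', m₂', b)
      ≤ ∑ m₂'' : Fin c₂, kpow (Qk A c₁ c₂ θ₁ θ₂) n y (m₁', m₂'', b) :=
        Finset.single_le_sum
          (f := fun m₂'' : Fin c₂ => kpow (Qk A c₁ c₂ θ₁ θ₂) n y (m₁', m₂'', b))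
          (fun _ _ => zero_le) (Finset.mem_univ m₂')
    _ ≤ ∑ m₁'' : Fin c₁, ∑ m₂'' : Fin c₂, kpow (Qk A c₁ c₂ θ₁ θ₂) n y (m₁'', m₂'', b) :=
        Finset.single_le_sum
          (f := fun m₁'' : Fin c₁ => ∑ m₂'' : Fin c₂, kpow (Qk A c₁ c₂ θ₁ θ₂) n y (m₁'', m₂'', b))
          (fun _ _ => zero_le) (Finset.mem_univ m₁')

/-- Proposition A.2: under Assumptions 1 and 3, for any vector
`c = (c₁,c₂)` of positive integers and all `θ₁,θ₂ ∈ ℝ`,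
`cp(A_{*,*}(θ₁,θ₂)) = cp(ᶜA_{*,*}(c₁θ₁, c₂θ₂))`. -/
theorem cp_Ass_eq_cp_cAss {s₀ : ℕ} (hs : 0 < s₀)
    (A : ℤ → ℤ → Matrix (Fin s₀) (Fin s₀) ℝ) (hA : IsMMRW A)
    (h1 : Assumption1 A) (h3 : Assumption3 A)
    (c₁ c₂ : ℕ) (hc₁ : 0 < c₁) (hc₂ : 0 < c₂) (θ₁ θ₂ : ℝ) :
    cp (fun a b : Fin s₀ => ENNReal.ofReal (Ass A θ₁ θ₂ a b)) =
    cp (fun a b : Fin c₁ × Fin c₂ × Fin s₀ =>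
      ENNReal.ofReal (cAss A c₁ c₂ ((c₁ : ℝ) * θ₁) ((c₂ : ℝ) * θ₂) a b)) := by
  classical
  have key : {r : ℝ≥0∞ | ∀ i j, (∑' n : ℕ, r ^ n *
      kpow (fun a b : Fin s₀ => ENNReal.ofReal (Ass A θ₁ θ₂ a b)) n i j) ≠ ⊤} =
    {r : ℝ≥0∞ | ∀ i j, (∑' n : ℕ, r ^ n *
      kpow (fun a b : Fin c₁ × Fin c₂ × Fin s₀ =>
        ENNReal.ofReal (cAss A c₁ c₂ ((c₁ : ℝ) * θ₁) ((c₂ : ℝ) * θ₂) a b)) n i j) ≠ ⊤} := by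
    ext r
    simp only [Set.mem_setOf_eq]
    constructor
    · intro h y y'
      have hb : ∀ n : ℕ, r ^ n * kpow (fun a b : Fin c₁ × Fin c₂ × Fin s₀ =>
            ENNReal.ofReal (cAss A c₁ c₂ ((c₁ : ℝ) * θ₁) ((c₂ : ℝ) * θ₂) a b)) n y y'
          ≤ wgt θ₁ θ₂ y * vgt θ₁ θ₂ y' * (r ^ n *
            kpow (fun a b : Fin s₀ => ENNReal.ofReal (Ass A θ₁ θ₂ a b)) n y.2.2 y'.2.2) := by
        intro n
        rw [kpow_cAss]
        calc r ^ n * (wgt θ₁ θ₂ y * vgt θ₁ θ₂ y' * kpow (Qk A c₁ c₂ θ₁ θ₂) n y y')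
            = wgt θ₁ θ₂ y * vgt θ₁ θ₂ y' *
                (r ^ n * kpow (Qk A c₁ c₂ θ₁ θ₂) n y y') := by ring
          _ ≤ _ := by
              gcongr
              exact kpow_Qk_le hA hc₁ hc₂ θ₁ θ₂ n y y'.1 y'.2.1 y'.2.2
      refine ne_top_of_le_ne_top ?_ (ENNReal.tsum_le_tsum hb)
      rw [ENNReal.tsum_mul_left]
      exact ENNReal.mul_ne_top (ENNReal.mul_ne_top (wgt_ne_top y) (vgt_ne_top y'))
        (h y.2.2 y'.2.2)
    · intro h a b
      set y₀ : Fin c₁ × Fin c₂ × Fin s₀ := (⟨0, hc₁⟩, ⟨0, hc₂⟩, a) with hy₀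
      have hq : ∀ y' : Fin c₁ × Fin c₂ × Fin s₀,
          (∑' n : ℕ, r ^ n * kpow (Qk A c₁ c₂ θ₁ θ₂) n y₀ y') ≠ ⊤ := by
        intro y'
        have heq : ∀ n : ℕ, r ^ n * kpow (Qk A c₁ c₂ θ₁ θ₂) n y₀ y'
            = vgt θ₁ θ₂ y₀ * wgt θ₁ θ₂ y' * (r ^ n *
              kpow (fun a b : Fin c₁ × Fin c₂ × Fin s₀ =>
                ENNReal.ofReal (cAss A c₁ c₂ ((c₁ : ℝ) * θ₁) ((c₂ : ℝ) * θ₂) a b)) n y₀ y') := by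
          intro n
          rw [kpow_cAss]
          calc r ^ n * kpow (Qk A c₁ c₂ θ₁ θ₂) n y₀ y'
              = (vgt θ₁ θ₂ y₀ * wgt θ₁ θ₂ y₀) * (wgt θ₁ θ₂ y' * vgt θ₁ θ₂ y') *
                  (r ^ n * kpow (Qk A c₁ c₂ θ₁ θ₂) n y₀ y') := by
                rw [vw y₀, wv y', one_mul, one_mul]
            _ = vgt θ₁ θ₂ y₀ * wgt θ₁ θ₂ y' * (r ^ n *
                  (wgt θ₁ θ₂ y₀ * vgt θ₁ θ₂ y' * kpow (Qk A c₁ c₂ θ₁ θ₂) n y₀ y')) := by ring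
        rw [tsum_congr heq, ENNReal.tsum_mul_left]
        exact ENNReal.mul_ne_top (ENNReal.mul_ne_top (vgt_ne_top y₀) (wgt_ne_top y')) (h y₀ y')
      have hsplit : (∑' n : ℕ, r ^ n *
            kpow (fun a b : Fin s₀ => ENNReal.ofReal (Ass A θ₁ θ₂ a b)) n a b)
          = ∑ m₁' : Fin c₁, ∑ m₂' : Fin c₂,
              ∑' n : ℕ, r ^ n * kpow (Qk A c₁ c₂ θ₁ θ₂) n y₀ (m₁', m₂', b) := by
        calc (∑' n : ℕ, r ^ n *
              kpow (fun a b : Fin s₀ => ENNReal.ofReal (Ass A θ₁ θ₂ a b)) n a b)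
            = ∑' n : ℕ, ∑ m₁' : Fin c₁, ∑ m₂' : Fin c₂,
                r ^ n * kpow (Qk A c₁ c₂ θ₁ θ₂) n y₀ (m₁', m₂', b) := by
              refine tsum_congr fun n => ?_
              rw [show kpow (fun a b : Fin s₀ => ENNReal.ofReal (Ass A θ₁ θ₂ a b)) n a b =
                  kpow (fun a b : Fin s₀ => ENNReal.ofReal (Ass A θ₁ θ₂ a b)) n y₀.2.2 b from rfl,
                ← kpow_Qk_sum hA hc₁ hc₂ θ₁ θ₂ n y₀ b]
              simp only [Finset.mul_sum]
          _ = ∑ m₁' : Fin c₁, ∑' n : ℕ, ∑ m₂' : Fin c₂,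
                r ^ n * kpow (Qk A c₁ c₂ θ₁ θ₂) n y₀ (m₁', m₂', b) :=
              Summable.tsum_finsetSum (fun _ _ => ENNReal.summable)
          _ = ∑ m₁' : Fin c₁, ∑ m₂' : Fin c₂,
                ∑' n : ℕ, r ^ n * kpow (Qk A c₁ c₂ θ₁ θ₂) n y₀ (m₁', m₂', b) :=
              Finset.sum_congr rfl fun m₁' _ => Summable.tsum_finsetSum (fun _ _ => ENNReal.summable)
      rw [hsplit]
      exact (ENNReal.sum_lt_top.mpr fun m₁' _ =>
        (ENNReal.sum_lt_top.mpr fun m₂' _ => (hq _).lt_top)).ne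
  unfold cp
  exact congrArg sSup key
end MMRW2d
end
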